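/- arXiv:1605.01781 — 6 statements merged into one kernel-verified Lean document; each statement's English description precedes it below -/
import Mathlib

section
/- The partite product of directed complete cyclic multipartite graphs satisfies C⃗_(x:k) ⊗ C⃗_(y:k) ≅ C⃗_(xy:k). -/
/-- Arc relation of the directed complete cyclic multipartite graph `C⃗_(x:k)`:
arcs go from any vertex of part `i` to any vertex of part `i+1`. -/
def cvecArcs (x k : ℕ) : (ZMod x × ZMod k) → (ZMod x × ZMod k) → Prop :=
  fun a b => b.2 = a.2 + 1

/-- Partite product of directed graphs (arc relations) with part maps `pV`, `pW`. -/
def dprod {V W P : Type} (A : V → V → Prop) (B : W → W → Prop)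
    (pV : V → P) (pW : W → P) :
    {x : V × W // pV x.1 = pW x.2} → {x : V × W // pV x.1 = pW x.2} → Prop :=
  fun a b => A a.1.1 b.1.1 ∧ B a.1.2 b.1.2

lemma zmodProdEquivAux (x y : ℕ) : Nonempty (ZMod x × ZMod y ≃ ZMod (x * y)) := by
  rcases Nat.eq_zero_or_pos x with hx | hx
  · subst hx
    simp only [Nat.zero_mul]
    haveI : Countable (ZMod y) := by
      cases y
      · exact inferInstanceAs (Countable ℤ)
      · infer_instance
    have h1 : Countable (ZMod 0 × ZMod y) := inferInstanceAs (Countable (ℤ × ZMod y))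
    have h2 : Infinite (ZMod 0 × ZMod y) := by
      rcases Nat.eq_zero_or_pos y with hy | hy
      · subst hy; exact inferInstanceAs (Infinite (ℤ × ℤ))
      · haveI : NeZero y := ⟨hy.ne'⟩
        exact inferInstanceAs (Infinite (ℤ × ZMod y))
    obtain ⟨d⟩ := nonempty_denumerable_iff.2 ⟨h1, h2⟩
    exact ⟨(Denumerable.eqv _).trans (Denumerable.eqv ℤ).symm⟩
  · rcases Nat.eq_zero_or_pos y with hy | hy
    · subst hy
      simp only [Nat.mul_zero]
      haveI : NeZero x := ⟨hx.ne'⟩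
      have h1 : Countable (ZMod x × ZMod 0) := inferInstanceAs (Countable (ZMod x × ℤ))
      have h2 : Infinite (ZMod x × ZMod 0) := inferInstanceAs (Infinite (ZMod x × ℤ))
      obtain ⟨d⟩ := nonempty_denumerable_iff.2 ⟨h1, h2⟩
      exact ⟨(Denumerable.eqv _).trans (Denumerable.eqv ℤ).symm⟩
    · haveI : NeZero x := ⟨hx.ne'⟩
      haveI : NeZero y := ⟨hy.ne'⟩
      haveI : NeZero (x * y) := ⟨Nat.mul_ne_zero hx.ne' hy.ne'⟩
      exact ⟨Fintype.equivOfCardEq (by simp [ZMod.card])⟩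

/-- `C⃗_(x:k) ⊗ C⃗_(y:k) ≅ C⃗_(xy:k)`. -/
theorem stmt5 (x y k : ℕ) :
    ∃ e : {p : (ZMod x × ZMod k) × (ZMod y × ZMod k) // p.1.2 = p.2.2} ≃
        ZMod (x * y) × ZMod k,
      ∀ a b, dprod (cvecArcs x k) (cvecArcs y k) Prod.snd Prod.snd a b ↔
        cvecArcs (x * y) k (e a) (e b) := by
  obtain ⟨f⟩ := zmodProdEquivAux x y
  let g : {p : (ZMod x × ZMod k) × (ZMod y × ZMod k) // p.1.2 = p.2.2} ≃
      (ZMod x × ZMod y) × ZMod k :=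
    { toFun := fun p => ((p.1.1.1, p.1.2.1), p.1.1.2)
      invFun := fun q => ⟨((q.1.1, q.2), (q.1.2, q.2)), rfl⟩
      left_inv := fun p => by
        ext <;> simp
        exact p.2
      right_inv := fun q => rfl }
  refine ⟨g.trans (Equiv.prodCongr f (Equiv.refl _)), fun a b => ?_⟩
  simp only [dprod, cvecArcs, Equiv.trans_apply, Equiv.prodCongr_apply, Equiv.coe_refl,
    Prod.map_snd, id_eq]
  show _ ↔ b.1.1.2 = a.1.1.2 + 1
  constructor
  · exact fun h => h.1
  · intro h
    refine ⟨h, ?_⟩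
    rw [← a.2, ← b.2]
    exact h
end

section
/- Let C⃗ be a directed cycle of length n in C⃗_(x:k) and C⃗' a directed cycle of length m in C⃗_(y:k) (where k divides both n and m, each cycle visiting parts cyclically). Then C⃗⊗C⃗' consists of gcd(n,m)/k vertex-disjoint directed cycles, each of length lcm(n,m) = nm/gcd(n,m), together with xyk − nm/k isolated vertices. -/
theorem aux_castdvd {k n : ℕ} (hkn : k ∣ n) (a b : ℤ) (h : (a : ZMod n) = (b : ZMod n)) :
    (a : ZMod k) = (b : ZMod k) := by
  rw [ZMod.intCast_eq_intCast_iff] at h ⊢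
  exact h.of_dvd (Int.natCast_dvd_natCast.mpr hkn)

theorem aux_valInt {k n : ℕ} [NeZero n] (hkn : k ∣ n) (a : ℤ) :
    ((((a : ZMod n)).val : ℤ) : ZMod k) = (a : ZMod k) := by
  apply aux_castdvd hkn
  push_cast
  exact ZMod.natCast_zmod_val _

theorem aux_snd {x k n : ℕ} [NeZero n] (f : ZMod n → ZMod x × ZMod k)
    (hstep : ∀ t, (f (t + 1)).2 = (f t).2 + 1) (u : ZMod n) :
    (f u).2 = (f 0).2 + (u.val : ZMod k) := by
  have hnat : ∀ i : ℕ, (f (i : ZMod n)).2 = (f 0).2 + (i : ZMod k) := by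
    intro i
    induction i with
    | zero => simp
    | succ i ih => push_cast; rw [hstep, ih]; ring
  conv_lhs => rw [← ZMod.natCast_zmod_val u]
  rw [hnat]


/-- The product of a directed `n`-cycle in `C⃗_(x:k)` and a directed `m`-cycle in
`C⃗_(y:k)` consists of `gcd(n,m)/k` vertex-disjoint directed cycles of length
`lcm(n,m)` together with `xyk − nm/k` isolated vertices. -/
theorem stmt6 (x y k n m : ℕ) (hn : 0 < n) (hm : 0 < m) (hkn : k ∣ n) (hkm : k ∣ m)
    (C : (ZMod x × ZMod k) → (ZMod x × ZMod k) → Prop)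
    (C' : (ZMod y × ZMod k) → (ZMod y × ZMod k) → Prop)
    (hCsub : ∀ a b, C a b → cvecArcs x k a b)
    (hC'sub : ∀ a b, C' a b → cvecArcs y k a b)
    (hC : ∃ f : ZMod n → ZMod x × ZMod k, Function.Injective f ∧
      ∀ a b, C a b ↔ ∃ t, f t = a ∧ f (t + 1) = b)
    (hC' : ∃ g : ZMod m → ZMod y × ZMod k, Function.Injective g ∧
      ∀ a b, C' a b ↔ ∃ t, g t = a ∧ g (t + 1) = b) :
    ∃ F : Fin (Nat.gcd n m / k) → ZMod (Nat.lcm n m) →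
        {p : (ZMod x × ZMod k) × (ZMod y × ZMod k) // p.1.2 = p.2.2},
      (∀ j, Function.Injective (F j)) ∧
      (∀ j j' t t', F j t = F j' t' → j = j') ∧
      (∀ a b, dprod C C' Prod.snd Prod.snd a b ↔ ∃ j t, F j t = a ∧ F j (t + 1) = b) ∧
      {v : {p : (ZMod x × ZMod k) × (ZMod y × ZMod k) // p.1.2 = p.2.2} |
        ∀ j t, F j t ≠ v}.ncard = x * y * k - n * m / k := by
  obtain ⟨f, hfinj, hfC⟩ := hC
  obtain ⟨g, hginj, hgC⟩ := hC'
  have hk : 0 < k := Nat.pos_of_dvd_of_pos hkn hn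
  haveI : NeZero n := ⟨hn.ne'⟩
  haveI : NeZero m := ⟨hm.ne'⟩
  haveI : NeZero k := ⟨hk.ne'⟩
  set d := Nat.gcd n m with hd_def
  set L := Nat.lcm n m with hL_def
  have hd : 0 < d := Nat.gcd_pos_of_pos_left m hn
  have hL : 0 < L := Nat.lcm_pos hn hm
  haveI : NeZero L := ⟨hL.ne'⟩
  have hkd : k ∣ d := Nat.dvd_gcd hkn hkm
  have hdn : d ∣ n := Nat.gcd_dvd_left n m
  have hdm : d ∣ m := Nat.gcd_dvd_right n m
  have hnL : n ∣ L := Nat.dvd_lcm_left n m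
  have hmL : m ∣ L := Nat.dvd_lcm_right n m
  obtain ⟨e, he⟩ := hkd
  have he0 : 0 < e := Nat.pos_of_ne_zero (fun h => by simp [h] at he; omega)
  have hek : d / k = e := by rw [he]; exact Nat.mul_div_cancel_left e hk
  -- cast maps
  set φn : ZMod L →+* ZMod n := ZMod.castHom hnL (ZMod n) with hφn_def
  set φm : ZMod L →+* ZMod m := ZMod.castHom hmL (ZMod m) with hφm_def
  -- express casts as integer casts
  have hφnI : ∀ t : ZMod L, φn t = ((t.val : ℤ) : ZMod n) := by
    intro t; push_cast
    rw [hφn_def, ZMod.castHom_apply, ← ZMod.natCast_val]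
  have hφmI : ∀ t : ZMod L, φm t = ((t.val : ℤ) : ZMod m) := by
    intro t; push_cast
    rw [hφm_def, ZMod.castHom_apply, ← ZMod.natCast_val]
  -- step lemmas
  have hstepf : ∀ t, (f (t + 1)).2 = (f t).2 + 1 :=
    fun t => hCsub _ _ ((hfC _ _).mpr ⟨t, rfl, rfl⟩)
  have hstepg : ∀ t, (g (t + 1)).2 = (g t).2 + 1 :=
    fun t => hC'sub _ _ ((hgC _ _).mpr ⟨t, rfl, rfl⟩)
  have hf2 := aux_snd f hstepf
  have hg2 := aux_snd g hstepg
  -- the phase constant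
  set c : ℤ := ((g 0).2.val : ℤ) - ((f 0).2.val : ℤ) with hc_def
  have hc : (c : ZMod k) = (g 0).2 - (f 0).2 := by
    rw [hc_def]; push_cast [ZMod.natCast_zmod_val]; ring
  -- the condition for F
  have hcond : ∀ (j : Fin (d / k)) (t : ZMod L),
      (f (φn t + (((j : ℕ) * k : ℕ) : ZMod n) + (c : ZMod n))).2 = (g (φm t)).2 := by
    intro j t
    rw [hf2, hg2]
    have harg : φn t + (((j : ℕ) * k : ℕ) : ZMod n) + (c : ZMod n)
        = (((t.val : ℤ) + (j : ℕ) * k + c : ℤ) : ZMod n) := by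
      rw [hφnI]; push_cast; ring
    rw [harg]
    have h1 : ((φn t + (((j : ℕ) * k : ℕ) : ZMod n) + (c : ZMod n)).val : ZMod k)
        = (((t.val : ℤ) + (j : ℕ) * k + c : ℤ) : ZMod k) := by
      rw [harg]
      have := aux_valInt hkn ((t.val : ℤ) + (j : ℕ) * k + c)
      push_cast at this ⊢
      exact this
    rw [harg] at h1
    rw [h1]
    have h2 : (((φm t).val : ℕ) : ZMod k) = (((t.val : ℤ)) : ZMod k) := by
      rw [hφmI]
      have := aux_valInt hkm (t.val : ℤ)
      push_cast at this ⊢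
      exact this
    rw [h2]
    push_cast [hc]
    rw [ZMod.natCast_self]
    ring
  set F : Fin (d / k) → ZMod L → {p : (ZMod x × ZMod k) × (ZMod y × ZMod k) // p.1.2 = p.2.2} :=
    fun j t => ⟨(f (φn t + (((j : ℕ) * k : ℕ) : ZMod n) + (c : ZMod n)), g (φm t)), hcond j t⟩
    with hF_def
  -- injectivity of the CRT map
  have hLinj : ∀ t t' : ZMod L, φn t = φn t' → φm t = φm t' → t = t' := by
    intro t t' h1 h2
    rw [hφnI, hφnI, ZMod.intCast_eq_intCast_iff, Int.ModEq] at h1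
    rw [hφmI, hφmI, ZMod.intCast_eq_intCast_iff, Int.ModEq] at h2
    have h1' : (n : ℤ) ∣ (t'.val : ℤ) - t.val := Int.ModEq.dvd h1
    have h2' : (m : ℤ) ∣ (t'.val : ℤ) - t.val := Int.ModEq.dvd h2
    have hLd : (L : ℤ) ∣ (t'.val : ℤ) - t.val := by
      have := lcm_dvd h1' h2'
      rwa [← Int.coe_lcm, Int.lcm_natCast_natCast] at this
    have : ((t.val : ℤ) : ZMod L) = ((t'.val : ℤ) : ZMod L) := by
      rw [ZMod.intCast_eq_intCast_iff]
      exact Int.modEq_iff_dvd.mpr hLd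
    push_cast [ZMod.natCast_zmod_val] at this
    exact this
  -- decomposition of an equality of F-values
  have hFeq : ∀ (j j' : Fin (d / k)) (t t' : ZMod L), F j t = F j' t' →
      φm t = φm t' ∧
        φn t + (((j : ℕ) * k : ℕ) : ZMod n) = φn t' + (((j' : ℕ) * k : ℕ) : ZMod n) := by
    intro j j' t t' h
    rw [hF_def] at h
    simp only [Subtype.mk.injEq, Prod.mk.injEq] at h
    obtain ⟨h1, h2⟩ := h
    have h2' := hginj h2
    have h1' := hfinj h1
    exact ⟨h2', add_right_cancel h1'⟩
  haveI : NeZero d := ⟨hd.ne'⟩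
  have hjkb : ∀ j : Fin (d / k), (j : ℕ) * k < d := by
    intro j
    have hj' : (j : ℕ) < e := hek ▸ j.2
    have h1 : (j : ℕ) * k < e * k := (Nat.mul_lt_mul_right hk).mpr hj'
    have h2 : e * k = d := by rw [mul_comm]; exact he.symm
    exact lt_of_lt_of_eq h1 h2
  have hdisj : ∀ j j' t t', F j t = F j' t' → j = j' := by
    intro j j' t t' h
    obtain ⟨h2, h1⟩ := hFeq j j' t t' h
    rw [hφnI, hφnI] at h1
    rw [hφmI, hφmI] at h2
    have h1' : (n : ℤ) ∣ ((t'.val : ℤ) + (j' : ℕ) * k) - ((t.val : ℤ) + (j : ℕ) * k) := by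
      have hcc : (((t.val : ℤ) + (j : ℕ) * k : ℤ) : ZMod n)
          = (((t'.val : ℤ) + (j' : ℕ) * k : ℤ) : ZMod n) := by
        push_cast at h1 ⊢
        exact h1
      rw [ZMod.intCast_eq_intCast_iff] at hcc
      exact Int.ModEq.dvd hcc
    have h2' : (m : ℤ) ∣ (t'.val : ℤ) - t.val := by
      rw [ZMod.intCast_eq_intCast_iff] at h2
      exact Int.ModEq.dvd h2
    have hd1 : (d : ℤ) ∣ ((j' : ℕ) * k : ℤ) - ((j : ℕ) * k : ℤ) := by
      have a1 := dvd_trans (Int.natCast_dvd_natCast.mpr hdn) h1'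
      have a2 := dvd_trans (Int.natCast_dvd_natCast.mpr hdm) h2'
      have a3 := dvd_sub a1 a2
      have e3 : ((j' : ℕ) * k : ℤ) - ((j : ℕ) * k : ℤ)
          = ((t'.val : ℤ) + (j' : ℕ) * k) - ((t.val : ℤ) + (j : ℕ) * k) - ((t'.val : ℤ) - t.val) := by
        ring
      rw [e3]; exact a3
    have hzz : (((j : ℕ) * k : ℤ) : ZMod d) = (((j' : ℕ) * k : ℤ) : ZMod d) := by
      rw [ZMod.intCast_eq_intCast_iff]
      exact Int.modEq_iff_dvd.mpr hd1
    have hnn : (((j : ℕ) * k : ℕ) : ZMod d) = (((j' : ℕ) * k : ℕ) : ZMod d) := by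
      exact_mod_cast hzz
    have hvv := congrArg ZMod.val hnn
    rw [ZMod.val_cast_of_lt (hjkb j), ZMod.val_cast_of_lt (hjkb j')] at hvv
    exact Fin.ext (Nat.eq_of_mul_eq_mul_right hk hvv)
  have hFinj : ∀ j, Function.Injective (F j) := by
    intro j t t' h
    obtain ⟨h2, h1⟩ := hFeq j j t t' h
    exact hLinj t t' (add_right_cancel h1) h2
  -- the arc characterization
  have hiff : ∀ a b, dprod C C' Prod.snd Prod.snd a b ↔ ∃ j t, F j t = a ∧ F j (t + 1) = b := by
    intro a b
    constructor
    · intro h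
      obtain ⟨h1, h2⟩ := h
      obtain ⟨s, hs1, hs2⟩ := (hfC _ _).mp h1
      obtain ⟨u, hu1, hu2⟩ := (hgC _ _).mp h2
      have hphase : (((s.val : ℤ) - u.val - c : ℤ) : ZMod k) = 0 := by
        have hp : (f s).2 = (g u).2 := by rw [hs1, hu1]; exact a.2
        rw [hf2, hg2] at hp
        push_cast [hc]
        linear_combination hp
      obtain ⟨D', hD⟩ : (k : ℤ) ∣ ((s.val : ℤ) - u.val - c) := by
        rwa [ZMod.intCast_zmod_eq_zero_iff_dvd] at hphase
      set p : ℤ := Nat.gcdA n m with hp_def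
      set q : ℤ := Nat.gcdB n m with hq_def
      have hbz : (d : ℤ) = n * p + m * q := Nat.gcd_eq_gcd_ab n m
      have hec : (d : ℤ) = k * e := by exact_mod_cast he
      set w : ℤ := D' / e with hw_def
      set jr : ℤ := D' % e with hjr_def
      have hjr0 : 0 ≤ jr := Int.emod_nonneg D' (by exact_mod_cast he0.ne')
      have hjre : jr < e := Int.emod_lt_of_pos D' (by exact_mod_cast he0)
      have hDw : D' = e * w + jr := by
        rw [hw_def, hjr_def]
        exact (Int.mul_ediv_add_emod D' e).symm
      set X : ℤ := (u.val : ℤ) + m * (w * q) with hX_def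
      set t : ZMod L := ((X : ℤ) : ZMod L) with ht_def
      have hjlt : jr.toNat < d / k := by rw [hek]; omega
      set j : Fin (d / k) := ⟨jr.toNat, hjlt⟩ with hj_def
      have hmt : φm t = u := by
        rw [ht_def, map_intCast]
        have : u = ((u.val : ℤ) : ZMod m) := by push_cast [ZMod.natCast_zmod_val]; rfl
        rw [this, ZMod.intCast_eq_intCast_iff]
        apply Int.modEq_iff_dvd.mpr
        exact ⟨-(w * q), by rw [hX_def]; ring⟩
      have hnt : φn t + (((j : ℕ) * k : ℕ) : ZMod n) + (c : ZMod n) = s := by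
        rw [ht_def, map_intCast]
        have hs' : s = ((s.val : ℤ) : ZMod n) := by push_cast [ZMod.natCast_zmod_val]; rfl
        have hjc : (((j : ℕ) * k : ℕ) : ZMod n) = ((jr * k : ℤ) : ZMod n) := by
          rw [hj_def]
          have htn : ((jr.toNat : ℤ) : ZMod n) = ((jr : ℤ) : ZMod n) := by
            rw [Int.toNat_of_nonneg hjr0]
          push_cast
          congr 1
          exact_mod_cast htn
        rw [hs', hjc, ← Int.cast_add, ← Int.cast_add, ZMod.intCast_eq_intCast_iff]
        apply Int.modEq_iff_dvd.mpr
        refine ⟨p * w, ?_⟩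
        linear_combination hD + k * hDw + w * hbz - w * hec - hX_def
      refine ⟨j, t, ?_, ?_⟩
      · refine Subtype.ext (Prod.ext ?_ ?_)
        · show f _ = a.1.1
          rw [hnt]
          exact hs1
        · show g _ = a.1.2
          rw [hmt]
          exact hu1
      · have hnt1 : φn (t + 1) + (((j : ℕ) * k : ℕ) : ZMod n) + (c : ZMod n) = s + 1 := by
          rw [map_add, map_one]
          linear_combination hnt
        have hmt1 : φm (t + 1) = u + 1 := by rw [map_add, map_one, hmt]
        refine Subtype.ext (Prod.ext ?_ ?_)
        · show f _ = b.1.1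
          rw [hnt1]
          exact hs2
        · show g _ = b.1.2
          rw [hmt1]
          exact hu2
    · rintro ⟨j, t, rfl, rfl⟩
      refine ⟨(hfC _ _).mpr ⟨φn t + (((j : ℕ) * k : ℕ) : ZMod n) + (c : ZMod n), rfl, ?_⟩,
              (hgC _ _).mpr ⟨φm t, rfl, ?_⟩⟩
      · show f _ = f _
        congr 1
        rw [map_add, map_one]
        ring
      · show g _ = g _
        congr 1
        rw [map_add, map_one]
  -- counting
  refine ⟨F, hFinj, hdisj, hiff, ?_⟩
  set G : Fin (d / k) × ZMod L → {p : (ZMod x × ZMod k) × (ZMod y × ZMod k) // p.1.2 = p.2.2} :=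
    fun pr => F pr.1 pr.2 with hG_def
  have hGinj : Function.Injective G := by
    rintro ⟨j, t⟩ ⟨j', t'⟩ h
    obtain rfl : j = j' := hdisj j j' t t' h
    obtain rfl : t = t' := hFinj j h
    rfl
  have hset : {v : {p : (ZMod x × ZMod k) × (ZMod y × ZMod k) // p.1.2 = p.2.2} |
      ∀ j t, F j t ≠ v} = (Set.range G)ᶜ := by
    ext v
    simp only [Set.mem_setOf_eq, Set.mem_compl_iff, Set.mem_range, not_exists]
    exact ⟨fun h pr => h pr.1 pr.2, fun h j t => h (j, t)⟩
  have hcardDom : Nat.card (Fin (d / k) × ZMod L) = n * m / k := by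
    rw [Nat.card_prod, Nat.card_eq_fintype_card, Fintype.card_fin, Nat.card_zmod, hek]
    have h0' : d * L = n * m := Nat.gcd_mul_lcm n m
    rw [he] at h0'
    have hnm : n * m = (e * L) * k := by rw [← h0']; ring
    rw [hnm, Nat.mul_div_cancel _ hk]
  have hrange : (Set.range G).ncard = n * m / k := by
    rw [← Nat.card_coe_set_eq, Nat.card_range_of_injective hGinj, hcardDom]
  have eqv : {p : (ZMod x × ZMod k) × (ZMod y × ZMod k) // p.1.2 = p.2.2} ≃
      (ZMod x × ZMod y × ZMod k) :=
    { toFun := fun v => (v.1.1.1, v.1.2.1, v.1.1.2)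
      invFun := fun w => ⟨((w.1, w.2.2), (w.2.1, w.2.2)), rfl⟩
      left_inv := by
        rintro ⟨⟨⟨a, i⟩, ⟨b, i'⟩⟩, hv⟩
        simp only at hv
        subst hv
        rfl
      right_inv := fun w => rfl }
  have hT : Nat.card {p : (ZMod x × ZMod k) × (ZMod y × ZMod k) // p.1.2 = p.2.2} = x * y * k := by
    rw [Nat.card_congr eqv, Nat.card_prod, Nat.card_prod, Nat.card_zmod, Nat.card_zmod,
      Nat.card_zmod, mul_assoc]
  by_cases hxy : x = 0 ∨ y = 0
  · haveI : Infinite (ZMod x × ZMod y × ZMod k) := by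
      rcases hxy with h | h
      · subst h
        haveI : Infinite (ZMod 0) := Int.infinite
        exact Prod.infinite_of_left
      · subst h
        haveI : Infinite (ZMod 0) := Int.infinite
        haveI : Infinite (ZMod 0 × ZMod k) := Prod.infinite_of_left
        exact Prod.infinite_of_right
    haveI : Infinite {p : (ZMod x × ZMod k) × (ZMod y × ZMod k) // p.1.2 = p.2.2} :=
      Infinite.of_injective ⇑eqv.symm eqv.symm.injective
    have hinf : {v : {p : (ZMod x × ZMod k) × (ZMod y × ZMod k) // p.1.2 = p.2.2} |
        ∀ j t, F j t ≠ v}.Infinite := by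
      rw [hset]
      exact (Set.finite_range G).infinite_compl
    rw [hinf.ncard]
    have : x * y * k = 0 := by rcases hxy with h | h <;> simp [h]
    omega
  · push_neg at hxy
    haveI : NeZero x := ⟨hxy.1⟩
    haveI : NeZero y := ⟨hxy.2⟩
    haveI : Finite {p : (ZMod x × ZMod k) × (ZMod y × ZMod k) // p.1.2 = p.2.2} :=
      Finite.of_equiv _ eqv.symm
    have hcompl := Set.ncard_add_ncard_compl (Set.range G)
    rw [hrange] at hcompl
    rw [hset]
    omega
end

section
/- If G⃗ is a spanning subgraph of C⃗_(x:k) whose components are directed cycles all of length n, and H⃗ is a spanning subgraph of C⃗_(y:k) whose components are directed cycles all of length m, then G⃗⊗H⃗ is a spanning subgraph of C⃗_(xy:k) whose components are directed cycles all of length lcm(n,m). -/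
/-- `A` is a spanning union of `c` vertex-disjoint directed cycles, each of length `n`:
the cycles partition the vertex set and the arcs of `A` are exactly the cycle arcs. -/
def IsCycleFactor {V : Type} (A : V → V → Prop) (c n : ℕ) : Prop :=
  ∃ F : Fin c → ZMod n → V,
    (∀ j, Function.Injective (F j)) ∧
    (∀ v : V, ∃! p : Fin c × ZMod n, F p.1 p.2 = v) ∧
    (∀ a b, A a b ↔ ∃ j t, F j t = a ∧ F j (t + 1) = b)

lemma stmt7_exists_psi (n m : ℕ) (hn : 0 < n) (hm : 0 < m) :
    ∃ ψ : ZMod n × ZMod m ≃ ZMod (Nat.gcd n m) × ZMod (Nat.lcm n m),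
      (∀ t s, ψ (t + 1, s + 1) = ((ψ (t, s)).1, (ψ (t, s)).2 + 1)) ∧
      (∀ t s, (ψ (t, s)).1 =
        ZMod.castHom (Nat.gcd_dvd_left n m) (ZMod (Nat.gcd n m)) t -
        ZMod.castHom (Nat.gcd_dvd_right n m) (ZMod (Nat.gcd n m)) s) := by
  haveI : NeZero n := ⟨hn.ne'⟩
  haveI : NeZero m := ⟨hm.ne'⟩
  set g := Nat.gcd n m with hgdef
  set L := Nat.lcm n m with hLdef
  have hg : 0 < g := Nat.gcd_pos_of_pos_left m hn
  have hL : 0 < L := Nat.lcm_pos hn hm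
  haveI : NeZero g := ⟨hg.ne'⟩
  haveI : NeZero L := ⟨hL.ne'⟩
  set a := Nat.gcdA n m with hadef
  set b := Nat.gcdB n m with hbdef
  have hbez : (g : ℤ) = n * a + m * b := Nat.gcd_eq_gcd_ab n m
  set ng : ℕ := n / g with hngdef
  set mg : ℕ := m / g with hmgdef
  have hgng : g * ng = n := Nat.mul_div_cancel' (Nat.gcd_dvd_left n m)
  have hgmg : g * mg = m := Nat.mul_div_cancel' (Nat.gcd_dvd_right n m)
  have hgL : g * L = n * m := Nat.gcd_mul_lcm n m
  have hmgn : mg * n = L := by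
    have h : g * (mg * n) = g * L := by
      calc g * (mg * n) = (g * mg) * n := by ring
        _ = m * n := by rw [hgmg]
        _ = n * m := by ring
        _ = g * L := hgL.symm
    exact Nat.eq_of_mul_eq_mul_left hg h
  have hngm : ng * m = L := by
    have h : g * (ng * m) = g * L := by
      calc g * (ng * m) = (g * ng) * m := by ring
        _ = n * m := by rw [hgng]
        _ = g * L := hgL.symm
    exact Nat.eq_of_mul_eq_mul_left hg h
  have hgng' : (g : ℤ) * ng = n := by exact_mod_cast congrArg Nat.cast hgng
  have hgmg' : (g : ℤ) * mg = m := by exact_mod_cast congrArg Nat.cast hgmg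
  have hmgn' : (mg : ℤ) * n = L := by exact_mod_cast congrArg Nat.cast hmgn
  have hngm' : (ng : ℤ) * m = L := by exact_mod_cast congrArg Nat.cast hngm
  have hone : a * ng + b * mg = (1 : ℤ) := by
    have h2 : (g : ℤ) * (a * ng + b * mg) = (g : ℤ) * 1 := by
      rw [mul_one]
      linear_combination a * hgng' + b * hgmg' - hbez
    have := mul_left_cancel₀ (show (g:ℤ) ≠ 0 by exact_mod_cast hg.ne') h2
    linarith
  -- the map
  set f : ZMod n × ZMod m → ZMod g × ZMod L := fun ts =>
    (ZMod.castHom (Nat.gcd_dvd_left n m) (ZMod g) ts.1 -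
       ZMod.castHom (Nat.gcd_dvd_right n m) (ZMod g) ts.2,
     ((b * mg * (ts.1.val : ℤ) + a * ng * (ts.2.val : ℤ) : ℤ) : ZMod L)) with hfdef
  have keyn : ∀ z : ℤ, (n:ℤ) ∣ z → (((mg : ℤ) * z : ℤ) : ZMod L) = 0 := by
    rintro z ⟨w, hw⟩
    rw [hw, ← mul_assoc, hmgn']
    push_cast
    simp
  have keym : ∀ z : ℤ, (m:ℤ) ∣ z → (((ng : ℤ) * z : ℤ) : ZMod L) = 0 := by
    rintro z ⟨w, hw⟩
    rw [hw, ← mul_assoc, hngm']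
    push_cast
    simp
  have valsucc_n : ∀ t : ZMod n, ∃ w : ℤ, (((t + 1 : ZMod n).val : ℤ)) = (t.val : ℤ) + 1 + n * w := by
    intro t
    have h2 : ((((t+1 : ZMod n).val : ℤ) - ((t.val:ℤ) + 1) : ℤ) : ZMod n) = 0 := by
      push_cast [ZMod.natCast_val, ZMod.cast_id]
      ring
    obtain ⟨w, hw⟩ := (ZMod.intCast_zmod_eq_zero_iff_dvd _ n).mp h2
    exact ⟨w, by linarith⟩
  have valsucc_m : ∀ t : ZMod m, ∃ w : ℤ, (((t + 1 : ZMod m).val : ℤ)) = (t.val : ℤ) + 1 + m * w := by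
    intro t
    have h2 : ((((t+1 : ZMod m).val : ℤ) - ((t.val:ℤ) + 1) : ℤ) : ZMod m) = 0 := by
      push_cast [ZMod.natCast_val, ZMod.cast_id]
      ring
    obtain ⟨w, hw⟩ := (ZMod.intCast_zmod_eq_zero_iff_dvd _ m).mp h2
    exact ⟨w, by linarith⟩
  have hcastg : ∀ (t : ZMod n), (ZMod.castHom (Nat.gcd_dvd_left n m) (ZMod g)) t = ((t.val : ℕ) : ZMod g) := by
    intro t; rw [ZMod.castHom_apply, ZMod.natCast_val]
  have hcastg' : ∀ (s : ZMod m), (ZMod.castHom (Nat.gcd_dvd_right n m) (ZMod g)) s = ((s.val : ℕ) : ZMod g) := by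
    intro s; rw [ZMod.castHom_apply, ZMod.natCast_val]
  have hinj : Function.Injective f := by
    rintro ⟨t, s⟩ ⟨t', s'⟩ heq
    rw [hfdef] at heq
    simp only [Prod.mk.injEq] at heq
    obtain ⟨h1, h2⟩ := heq
    rw [hcastg, hcastg', hcastg, hcastg'] at h1
    have hgd : ((((t.val : ℤ) - s.val) - ((t'.val : ℤ) - s'.val) : ℤ) : ZMod g) = 0 := by
      push_cast
      rw [sub_eq_zero]
      linear_combination h1
    obtain ⟨w, hw⟩ := (ZMod.intCast_zmod_eq_zero_iff_dvd _ g).mp hgd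
    have hLd : (((b * mg * (t.val : ℤ) + a * ng * (s.val : ℤ))
        - (b * mg * (t'.val : ℤ) + a * ng * (s'.val : ℤ)) : ℤ) : ZMod L) = 0 := by
      push_cast
      rw [sub_eq_zero]
      exact_mod_cast h2
    obtain ⟨u, hu⟩ := (ZMod.intCast_zmod_eq_zero_iff_dvd _ L).mp hLd
    set p : ℤ := (t.val : ℤ) - t'.val with hpdef
    set q : ℤ := (s.val : ℤ) - s'.val with hqdef
    have hpq : p - q = g * w := by rw [hpdef, hqdef]; linarith
    have hBsum : b * mg * p + a * ng * q = L * u := by rw [hpdef, hqdef]; linarith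
    have hndvd : (n : ℤ) ∣ p := by
      refine ⟨(mg:ℤ) * u + a * w, ?_⟩
      linear_combination (-p) * hone + hBsum + (a * (ng:ℤ)) * hpq - u * hmgn' + (a * w) * hgng'
    have hmdvd : (m : ℤ) ∣ q := by
      refine ⟨(ng:ℤ) * u - b * w, ?_⟩
      linear_combination hBsum - (b * (mg:ℤ)) * hpq - q * hone - (b * w) * hgmg' - u * hngm'
    have ht : t = t' := by
      have h0 : ((p : ℤ) : ZMod n) = 0 := (ZMod.intCast_zmod_eq_zero_iff_dvd _ n).mpr hndvd
      rw [hpdef] at h0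
      push_cast [ZMod.natCast_val, ZMod.cast_id, sub_eq_zero] at h0
      exact h0
    have hs : s = s' := by
      have h0 : ((q : ℤ) : ZMod m) = 0 := (ZMod.intCast_zmod_eq_zero_iff_dvd _ m).mpr hmdvd
      rw [hqdef] at h0
      push_cast [ZMod.natCast_val, ZMod.cast_id, sub_eq_zero] at h0
      exact h0
    exact Prod.ext ht hs
  have hbij : Function.Bijective f := by
    rw [Fintype.bijective_iff_injective_and_card]
    refine ⟨hinj, ?_⟩
    simp only [Fintype.card_prod, ZMod.card]
    omega
  refine ⟨Equiv.ofBijective f hbij, ?_, ?_⟩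
  · intro t s
    show f (t+1, s+1) = ((f (t,s)).1, (f (t,s)).2 + 1)
    rw [hfdef]
    simp only [Prod.mk.injEq]
    constructor
    · push_cast [map_add, map_one]; ring
    · obtain ⟨wt, hwt⟩ := valsucc_n t
      obtain ⟨ws, hws⟩ := valsucc_m s
      rw [hwt, hws]
      have e1 : (((b * mg * ((t.val:ℤ) + 1 + n * wt) + a * ng * ((s.val:ℤ) + 1 + m * ws)) : ℤ) : ZMod L)
          = ((b * mg * (t.val:ℤ) + a * ng * (s.val:ℤ) : ℤ) : ZMod L)
            + ((b * mg + a * ng : ℤ) : ZMod L)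
            + ((b : ℤ) : ZMod L) * (((mg : ℤ) * ((n:ℤ) * wt) : ℤ) : ZMod L)
            + ((a : ℤ) : ZMod L) * (((ng : ℤ) * ((m:ℤ) * ws) : ℤ) : ZMod L) := by
        push_cast; ring
      rw [e1, keyn _ ⟨wt, rfl⟩, keym _ ⟨ws, rfl⟩,
        show (b * mg + a * ng : ℤ) = 1 by linarith]
      simp
  · intro t s
    rfl

/-- If `G⃗` is a `C⃗_n`-factor of `C⃗_(x:k)` and `H⃗` is a `C⃗_m`-factor of `C⃗_(y:k)`,
then `G⃗ ⊗ H⃗` is a `C⃗_{lcm(n,m)}`-factor of `C⃗_(xy:k)`. -/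
theorem stmt7 (x y k n m : ℕ) (hn : 0 < n) (hm : 0 < m) (hk : 0 < k)
    (G : (ZMod x × ZMod k) → (ZMod x × ZMod k) → Prop)
    (H : (ZMod y × ZMod k) → (ZMod y × ZMod k) → Prop)
    (hGsub : ∀ a b, G a b → cvecArcs x k a b)
    (hHsub : ∀ a b, H a b → cvecArcs y k a b)
    (hG : ∃ c, IsCycleFactor G c n) (hH : ∃ c, IsCycleFactor H c m) :
    ∃ c, IsCycleFactor (dprod G H Prod.snd Prod.snd) c (Nat.lcm n m) := by
  haveI : NeZero n := ⟨hn.ne'⟩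
  haveI : NeZero m := ⟨hm.ne'⟩
  haveI : NeZero k := ⟨hk.ne'⟩
  obtain ⟨c, Fg, hFginj, hFgU, hFgarc⟩ := hG
  obtain ⟨d, Fh, hFhinj, hFhU, hFharc⟩ := hH
  -- second coordinate formulas
  have sndG : ∀ (j : Fin c) (s : ℕ), (Fg j (s : ZMod n)).2 = (Fg j 0).2 + (s : ZMod k) := by
    intro j s
    induction s with
    | zero => simp
    | succ s ih =>
      have harc : G (Fg j (s : ZMod n)) (Fg j ((s : ZMod n) + 1)) :=
        (hFgarc _ _).mpr ⟨j, (s : ZMod n), rfl, rfl⟩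
      have h := hGsub _ _ harc
      unfold cvecArcs at h
      push_cast
      rw [h, ih]
      ring
  have sndH : ∀ (j : Fin d) (s : ℕ), (Fh j (s : ZMod m)).2 = (Fh j 0).2 + (s : ZMod k) := by
    intro j s
    induction s with
    | zero => simp
    | succ s ih =>
      have harc : H (Fh j (s : ZMod m)) (Fh j ((s : ZMod m) + 1)) :=
        (hFharc _ _).mpr ⟨j, (s : ZMod m), rfl, rfl⟩
      have h := hHsub _ _ harc
      unfold cvecArcs at h
      push_cast
      rw [h, ih]
      ring
  have sndG' : ∀ (j : Fin c) (t : ZMod n), (Fg j t).2 = (Fg j 0).2 + ((t.val : ℕ) : ZMod k) := by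
    intro j t
    conv_lhs => rw [show t = ((t.val : ℕ) : ZMod n) by rw [ZMod.natCast_zmod_val]]
    exact sndG j t.val
  have sndH' : ∀ (j : Fin d) (s : ZMod m), (Fh j s).2 = (Fh j 0).2 + ((s.val : ℕ) : ZMod k) := by
    intro j s
    conv_lhs => rw [show s = ((s.val : ℕ) : ZMod m) by rw [ZMod.natCast_zmod_val]]
    exact sndH j s.val
  -- nonemptiness of Fin c, Fin d
  have hc : Nonempty (Fin c) := by
    obtain ⟨p, -, -⟩ := hFgU (0, 0)
    exact ⟨p.1⟩
  have hd : Nonempty (Fin d) := by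
    obtain ⟨p, -, -⟩ := hFhU (0, 0)
    exact ⟨p.1⟩
  obtain ⟨j0⟩ := hc
  obtain ⟨l0⟩ := hd
  -- k divides n and m
  have hkn : k ∣ n := by
    have h := sndG j0 n
    rw [ZMod.natCast_self] at h
    have h0 : ((n : ℕ) : ZMod k) = 0 := left_eq_add.mp h
    exact (ZMod.natCast_eq_zero_iff n k).mp h0
  have hkm : k ∣ m := by
    have h := sndH l0 m
    rw [ZMod.natCast_self] at h
    have h0 : ((m : ℕ) : ZMod k) = 0 := left_eq_add.mp h
    exact (ZMod.natCast_eq_zero_iff m k).mp h0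
  have hkg : k ∣ Nat.gcd n m := Nat.dvd_gcd hkn hkm
  haveI : NeZero (Nat.gcd n m) := ⟨(Nat.gcd_pos_of_pos_left m hn).ne'⟩
  haveI : NeZero (Nat.lcm n m) := ⟨(Nat.lcm_pos hn hm).ne'⟩
  obtain ⟨ψ, hψshift, hψfst⟩ := stmt7_exists_psi n m hn hm
  set ι : ZMod (Nat.gcd n m) →+* ZMod k := ZMod.castHom hkg (ZMod k) with hιdef
  -- compatibility
  have compat : ∀ (t : ZMod n) (s : ZMod m),
      ι ((ψ (t, s)).1) = ((t.val : ℕ) : ZMod k) - ((s.val : ℕ) : ZMod k) := by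
    intro t s
    rw [hψfst, map_sub]
    congr 1
    · rw [show (ZMod.castHom (Nat.gcd_dvd_left n m) (ZMod (Nat.gcd n m))) t = ((t.val : ℕ) : ZMod (Nat.gcd n m)) by
        rw [ZMod.castHom_apply, ZMod.natCast_val], map_natCast]
    · rw [show (ZMod.castHom (Nat.gcd_dvd_right n m) (ZMod (Nat.gcd n m))) s = ((s.val : ℕ) : ZMod (Nat.gcd n m)) by
        rw [ZMod.castHom_apply, ZMod.natCast_val], map_natCast]
  set σ : Fin c → ZMod k := fun j => (Fg j 0).2 with hσdef
  set τ : Fin d → ZMod k := fun l => (Fh l 0).2 with hτdef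
  -- index type
  set I := {w : (Fin c × Fin d) × ZMod (Nat.gcd n m) // ι w.2 = τ w.1.2 - σ w.1.1} with hIdef
  -- shift lemma for ψ.symm
  have hsymmshift : ∀ (r : ZMod (Nat.gcd n m)) (u : ZMod (Nat.lcm n m)),
      ψ.symm (r, u + 1) = ((ψ.symm (r, u)).1 + 1, (ψ.symm (r, u)).2 + 1) := by
    intro r u
    apply ψ.injective
    rw [Equiv.apply_symm_apply, hψshift, Prod.mk.eta, Equiv.apply_symm_apply]
  -- membership
  have hmem : ∀ (w : I) (u : ZMod (Nat.lcm n m)),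
      (Fg w.1.1.1 (ψ.symm (w.1.2, u)).1).2 = (Fh w.1.1.2 (ψ.symm (w.1.2, u)).2).2 := by
    intro w u
    have h1 : ψ (ψ.symm (w.1.2, u)) = (w.1.2, u) := Equiv.apply_symm_apply _ _
    have h2 := compat (ψ.symm (w.1.2, u)).1 (ψ.symm (w.1.2, u)).2
    rw [show ((ψ.symm (w.1.2, u)).1, (ψ.symm (w.1.2, u)).2) = ψ.symm (w.1.2, u) from rfl, h1] at h2
    have h3 := w.2
    rw [sndG' w.1.1.1, sndH' w.1.1.2]
    rw [h2] at h3
    -- h3 : t̄ - s̄ = τ l - σ j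
    have := h3
    simp only [hσdef, hτdef] at this
    linear_combination this
  set Fbig : I → ZMod (Nat.lcm n m) → {p : (ZMod x × ZMod k) × (ZMod y × ZMod k) // Prod.snd p.1 = Prod.snd p.2} :=
    fun w u => ⟨(Fg w.1.1.1 (ψ.symm (w.1.2, u)).1, Fh w.1.1.2 (ψ.symm (w.1.2, u)).2), hmem w u⟩
    with hFbigdef
  haveI : Fintype I := Subtype.fintype _
  refine ⟨Fintype.card I, fun i => Fbig ((Fintype.equivFin I).symm i), ?_, ?_, ?_⟩
  · -- injectivity
    intro i u u' h
    set w := (Fintype.equivFin I).symm i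
    have h' : (Fbig w u).1 = (Fbig w u').1 := congrArg Subtype.val h
    rw [hFbigdef] at h'
    simp only [Prod.mk.injEq] at h'
    have ht := hFginj _ h'.1
    have hs := hFhinj _ h'.2
    have : ψ.symm (w.1.2, u) = ψ.symm (w.1.2, u') := Prod.ext ht hs
    have := ψ.symm.injective this
    exact (Prod.ext_iff.mp this).2
  · -- existence and uniqueness
    rintro ⟨⟨vg, vh⟩, hv⟩
    obtain ⟨⟨j, t⟩, hjt, hjtu⟩ := hFgU vg
    obtain ⟨⟨l, s⟩, hls, hlsu⟩ := hFhU vh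
    have hphase : ι (ψ (t, s)).1 = τ l - σ j := by
      rw [compat]
      have h1 := sndG' j t
      have h2 := sndH' l s
      rw [hjt] at h1
      rw [hls] at h2
      have : vg.2 = vh.2 := hv
      simp only [hσdef, hτdef]
      rw [h1, h2] at this
      linear_combination this
    set w : I := ⟨((j, l), (ψ (t, s)).1), hphase⟩ with hwdef
    refine ⟨((Fintype.equivFin I) w, (ψ (t, s)).2), ?_, ?_⟩
    · show Fbig ((Fintype.equivFin I).symm ((Fintype.equivFin I) w)) _ = _
      rw [Equiv.symm_apply_apply, hFbigdef]
      apply Subtype.ext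
      show (Fg w.1.1.1 (ψ.symm (w.1.2, (ψ (t,s)).2)).1, Fh w.1.1.2 (ψ.symm (w.1.2, (ψ (t,s)).2)).2) = (vg, vh)
      rw [hwdef]
      rw [show (((ψ (t,s)).1 : ZMod (Nat.gcd n m)), (ψ (t,s)).2) = ψ (t,s) from rfl, Equiv.symm_apply_apply]
      exact Prod.ext hjt hls
    · rintro ⟨i', u'⟩ hp'
      set w' := (Fintype.equivFin I).symm i' with hw'def
      have hp'' : Fbig w' u' = ⟨(vg, vh), hv⟩ := hp'
      have h' : (Fbig w' u').1 = (vg, vh) := congrArg Subtype.val hp''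
      rw [hFbigdef] at h'
      simp only [Prod.mk.injEq] at h'
      have e1 : (w'.1.1.1, (ψ.symm (w'.1.2, u')).1) = (j, t) := hjtu _ h'.1
      have e2 : (w'.1.1.2, (ψ.symm (w'.1.2, u')).2) = (l, s) := hlsu _ h'.2
      have e1a := (Prod.ext_iff.mp e1).1
      have e1b := (Prod.ext_iff.mp e1).2
      have e2a := (Prod.ext_iff.mp e2).1
      have e2b := (Prod.ext_iff.mp e2).2
      have e3 : ψ (ψ.symm (w'.1.2, u')) = (w'.1.2, u') := Equiv.apply_symm_apply _ _
      have e4 : ψ.symm (w'.1.2, u') = (t, s) := Prod.ext e1b e2b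
      rw [e4] at e3
      have e5 : w'.1.2 = (ψ (t,s)).1 := (Prod.ext_iff.mp e3.symm).1
      have e6 : u' = (ψ (t,s)).2 := (Prod.ext_iff.mp e3.symm).2
      have ew : w' = w := by
        apply Subtype.ext
        rw [hwdef]
        exact Prod.ext (Prod.ext e1a e2a) e5
      have : i' = (Fintype.equivFin I) w := by
        rw [← ew, hw'def, Equiv.apply_symm_apply]
      exact Prod.ext this e6
  · -- arcs
    rintro ⟨⟨ag, ah⟩, hA⟩ ⟨⟨bg, bh⟩, hB⟩
    constructor
    · rintro ⟨hGa, hHa⟩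
      obtain ⟨j, t, h1, h2⟩ := (hFgarc _ _).mp hGa
      obtain ⟨l, s, h3, h4⟩ := (hFharc _ _).mp hHa
      have hphase : ι (ψ (t, s)).1 = τ l - σ j := by
        rw [compat]
        have hh1 := sndG' j t
        have hh2 := sndH' l s
        rw [h1] at hh1
        rw [h3] at hh2
        have : ag.2 = ah.2 := hA
        simp only [hσdef, hτdef]
        rw [hh1, hh2] at this
        linear_combination this
      set w : I := ⟨((j, l), (ψ (t, s)).1), hphase⟩ with hwdef
      refine ⟨(Fintype.equivFin I) w, (ψ (t, s)).2, ?_, ?_⟩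
      · show Fbig ((Fintype.equivFin I).symm ((Fintype.equivFin I) w)) _ = _
        rw [Equiv.symm_apply_apply, hFbigdef]
        apply Subtype.ext
        show (Fg w.1.1.1 (ψ.symm (w.1.2, (ψ (t,s)).2)).1, Fh w.1.1.2 (ψ.symm (w.1.2, (ψ (t,s)).2)).2) = (ag, ah)
        rw [hwdef]
        rw [show (((ψ (t,s)).1 : ZMod (Nat.gcd n m)), (ψ (t,s)).2) = ψ (t,s) from rfl, Equiv.symm_apply_apply]
        exact Prod.ext h1 h3
      · show Fbig ((Fintype.equivFin I).symm ((Fintype.equivFin I) w)) _ = _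
        rw [Equiv.symm_apply_apply, hFbigdef]
        apply Subtype.ext
        show (Fg w.1.1.1 (ψ.symm (w.1.2, (ψ (t,s)).2 + 1)).1, Fh w.1.1.2 (ψ.symm (w.1.2, (ψ (t,s)).2 + 1)).2) = (bg, bh)
        rw [hwdef]
        rw [hsymmshift]
        rw [show (((ψ (t,s)).1 : ZMod (Nat.gcd n m)), (ψ (t,s)).2) = ψ (t,s) from rfl, Equiv.symm_apply_apply]
        exact Prod.ext h2 h4
    · rintro ⟨i, u, hA', hB'⟩
      set w := (Fintype.equivFin I).symm i with hwdef
      have hA'' : (Fbig w u).1 = (ag, ah) := congrArg Subtype.val hA'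
      have hB'' : (Fbig w (u+1)).1 = (bg, bh) := congrArg Subtype.val hB'
      rw [hFbigdef] at hA'' hB''
      simp only [Prod.mk.injEq] at hA'' hB''
      rw [hsymmshift] at hB''
      constructor
      · apply (hFgarc _ _).mpr
        exact ⟨w.1.1.1, (ψ.symm (w.1.2, u)).1, hA''.1, hB''.1⟩
      · apply (hFharc _ _).mpr
        exact ⟨w.1.1.2, (ψ.symm (w.1.2, u)).2, hA''.2, hB''.2⟩
end

section
/- Let x ≥ 3 be odd and let s ∈ {0,2,3,...,x}. Then there exists a permutation φ of Z_x with exactly x−s fixed points such that for every non-fixed point i, gcd(x, i−φ(i)) = 1. -/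
def gfun (s i : ℕ) : ℕ :=
  if s % 2 = 0 then
    if i < s then (if i % 2 = 0 then i + 1 else i - 1) else i
  else
    if i + 3 < s then (if i % 2 = 0 then i + 1 else i - 1)
    else if i = s - 3 then s - 2
    else if i = s - 2 then s - 1
    else if i = s - 1 then s - 3
    else i

def gifun (s i : ℕ) : ℕ :=
  if s % 2 = 0 then
    if i < s then (if i % 2 = 0 then i + 1 else i - 1) else i
  else
    if i + 3 < s then (if i % 2 = 0 then i + 1 else i - 1)
    else if i = s - 2 then s - 3
    else if i = s - 1 then s - 2
    else if i = s - 3 then s - 1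
    else i

lemma gfun_lt {s x : ℕ} (hsx : s ≤ x) {i : ℕ} (h : i < x) : gfun s i < x := by
  unfold gfun; split_ifs <;> omega

lemma gifun_lt {s x : ℕ} (hsx : s ≤ x) {i : ℕ} (h : i < x) : gifun s i < x := by
  unfold gifun; split_ifs <;> omega

set_option maxHeartbeats 4000000 in
lemma gifun_gfun (s : ℕ) (_hs1 : s ≠ 1) (i : ℕ) : gifun s (gfun s i) = i := by
  unfold gfun gifun; split_ifs <;> omega

set_option maxHeartbeats 4000000 in
lemma gfun_gifun (s : ℕ) (_hs1 : s ≠ 1) (i : ℕ) : gfun s (gifun s i) = i := by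
  unfold gfun gifun; split_ifs <;> omega

lemma gfun_fix (s : ℕ) (hs1 : s ≠ 1) (i : ℕ) : gfun s i = i ↔ s ≤ i := by
  unfold gfun; split_ifs <;> omega

lemma gfun_diff (s : ℕ) (hs1 : s ≠ 1) {i : ℕ} (hi : i < s) :
    gfun s i = i + 1 ∨ gfun s i = i + 2 ∨ i = gfun s i + 1 ∨ i = gfun s i + 2 := by
  unfold gfun; split_ifs <;> omega

/-- For odd `x ≥ 3` and `s ∈ {0,2,3,…,x}` there is a permutation `φ` of `Z_x` with
exactly `x − s` fixed points such that every non-fixed point `i` satisfies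
`gcd(x, i − φ(i)) = 1`. -/
theorem stmt10 (x s : ℕ) (hx : Odd x) (hx3 : 3 ≤ x) (hs : s ≤ x) (hs1 : s ≠ 1) :
    ∃ φ : Equiv.Perm (ZMod x),
      {i : ZMod x | φ i = i}.ncard = x - s ∧
      ∀ i : ZMod x, φ i ≠ i → Nat.gcd x (i - φ i).val = 1 := by
  obtain ⟨n, rfl⟩ : ∃ n, x = n + 1 := ⟨x - 1, by omega⟩
  haveI : NeZero (n + 1) := ⟨Nat.succ_ne_zero n⟩
  set φ : Equiv.Perm (ZMod (n + 1)) :=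
    ⟨fun i => ((gfun s i.val : ℕ) : ZMod (n + 1)),
     fun i => ((gifun s i.val : ℕ) : ZMod (n + 1)),
     fun i => by
       show ((gifun s (((gfun s i.val : ℕ) : ZMod (n + 1)).val) : ℕ) : ZMod (n + 1)) = i
       rw [ZMod.val_cast_of_lt (gfun_lt hs (ZMod.val_lt i)), gifun_gfun s hs1]
       exact ZMod.natCast_rightInverse i,
     fun i => by
       show ((gfun s (((gifun s i.val : ℕ) : ZMod (n + 1)).val) : ℕ) : ZMod (n + 1)) = i
       rw [ZMod.val_cast_of_lt (gifun_lt hs (ZMod.val_lt i)), gfun_gifun s hs1]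
       exact ZMod.natCast_rightInverse i⟩ with hφ
  have happ : ∀ i : ZMod (n + 1), φ i = ((gfun s i.val : ℕ) : ZMod (n + 1)) := fun i => rfl
  have hval : ∀ i : ZMod (n + 1), (φ i).val = gfun s i.val := fun i => by
    rw [happ]; exact ZMod.val_cast_of_lt (gfun_lt hs (ZMod.val_lt i))
  have hfix : ∀ i : ZMod (n + 1), (φ i = i ↔ s ≤ i.val) := by
    intro i
    rw [← gfun_fix s hs1 i.val, ← hval i]
    constructor
    · intro h; rw [h]
    · intro h
      have h1 : (((φ i).val : ℕ) : ZMod (n + 1)) = ((i.val : ℕ) : ZMod (n + 1)) := by rw [h]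
      rwa [ZMod.natCast_rightInverse (φ i), ZMod.natCast_rightInverse i] at h1
  refine ⟨φ, ?_, ?_⟩
  · have hset : {i : ZMod (n + 1) | φ i = i} = Set.univ \ {i : ZMod (n + 1) | i.val < s} := by
      ext i
      simp only [Set.mem_setOf_eq, Set.mem_diff, Set.mem_univ, true_and, hfix i]
      omega
    have himg : {i : ZMod (n + 1) | i.val < s} = (Nat.cast : ℕ → ZMod (n + 1)) '' Set.Iio s := by
      ext i
      constructor
      · intro h; exact ⟨i.val, h, ZMod.natCast_rightInverse i⟩
      · rintro ⟨k, hk, rfl⟩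
        simp only [Set.mem_setOf_eq]
        rwa [ZMod.val_cast_of_lt (lt_of_lt_of_le hk hs)]
    have hinj : Set.InjOn (Nat.cast : ℕ → ZMod (n + 1)) (Set.Iio s) := by
      intro a ha b hb hab
      have h2 := congrArg ZMod.val hab
      rwa [ZMod.val_cast_of_lt (lt_of_lt_of_le ha hs),
        ZMod.val_cast_of_lt (lt_of_lt_of_le hb hs)] at h2
    have hcard1 : {i : ZMod (n + 1) | i.val < s}.ncard = s := by
      rw [himg, Set.ncard_image_of_injOn hinj, ← Finset.coe_range,
        Set.ncard_coe_finset, Finset.card_range]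
    rw [hset, Set.ncard_diff (Set.subset_univ _), hcard1, Set.ncard_univ,
      Nat.card_eq_fintype_card, ZMod.card]
  · intro i hne
    have hi : i.val < s := by
      by_contra h
      exact hne ((hfix i).mpr (le_of_not_gt h))
    have hieq : ((i.val : ℕ) : ZMod (n + 1)) = i := ZMod.natCast_rightInverse i
    rcases gfun_diff s hs1 hi with h | h | h | h
    · have hphi : φ i = i + 1 := by
        rw [happ, h]; push_cast; rw [hieq]
      have hd : i - φ i = -1 := by linear_combination -hphi
      rw [hd, ZMod.val_neg_one]
      have hc : Nat.gcd (n + 1) n ∣ 1 := by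
        have h1 := Nat.dvd_sub (Nat.gcd_dvd_left (n + 1) n) (Nat.gcd_dvd_right (n + 1) n)
        simpa using h1
      exact Nat.eq_one_of_dvd_one hc
    · have hphi : φ i = i + 2 := by
        rw [happ, h]; push_cast; rw [hieq]
      have hd : i - φ i = -2 := by linear_combination -hphi
      obtain ⟨m, rfl⟩ : ∃ m, n = m + 2 := ⟨n - 2, by omega⟩
      have h2 : ((m + 1 : ℕ) : ZMod (m + 2 + 1)) = -2 := by
        have h0 : ((m + 3 : ℕ) : ZMod (m + 3)) = 0 := ZMod.natCast_self _
        push_cast at h0 ⊢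
        linear_combination h0
      have hv : (-2 : ZMod (m + 2 + 1)).val = m + 1 := by
        rw [← h2, ZMod.val_cast_of_lt (by omega)]
      rw [hd, hv]
      have hg2 : Nat.gcd (m + 2 + 1) (m + 1) ∣ 2 := by
        have hsub := Nat.dvd_sub (Nat.gcd_dvd_left (m + 2 + 1) (m + 1))
          (Nat.gcd_dvd_right (m + 2 + 1) (m + 1))
        have he : m + 2 + 1 - (m + 1) = 2 := by omega
        rwa [he] at hsub
      rcases (Nat.dvd_prime Nat.prime_two).mp hg2 with h' | h'
      · exact h'
      · exfalso
        have hdl := Nat.gcd_dvd_left (m + 2 + 1) (m + 1)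
        rw [h'] at hdl
        have hodd := Nat.odd_iff.mp hx
        omega
    · have hphi : i = φ i + 1 := by
        rw [happ]
        conv_lhs => rw [← hieq, h]
        push_cast; ring
      have hd : i - φ i = 1 := by linear_combination hphi
      haveI : Fact (1 < n + 1) := ⟨by omega⟩
      rw [hd, ZMod.val_one]
      exact Nat.gcd_one_right _
    · have hphi : i = φ i + 2 := by
        rw [happ]
        conv_lhs => rw [← hieq, h]
        push_cast; ring
      have hd : i - φ i = 2 := by linear_combination hphi
      have hv : (2 : ZMod (n + 1)).val = 2 := by
        have : ((2 : ℕ) : ZMod (n + 1)) = 2 := by push_cast; ring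
        rw [← this, ZMod.val_cast_of_lt (by omega)]
      rw [hd, hv]
      exact Odd.coprime_two_right hx
end

section
/- Let x, y be odd with x,y ≥ 3 and let r_p be an integer with 0 ≤ r_p ≤ xy, r_p ∉ {1, xy−1}. Then there exists a bijection ψ of Z_x × Z_y with exactly r_p elements (i,α) satisfying ψ₁(i,α) = i, such that for every (i,α): either ψ₂(i,α) = α and gcd(x, i − ψ₁(i,α)) = 1, or ψ₁(i,α) = i and gcd(y, α − ψ₂(i,α)) = 1. -/
def nxt (s j : ℕ) : ℕ :=
  if s % 2 = 0 then (if j % 2 = 0 then j + 1 else j - 1)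
  else if j = 0 then 1
  else if j = 1 then 2
  else if j = 2 then 0
  else if j % 2 = 1 then j + 1
  else j - 1

def prv (s j : ℕ) : ℕ :=
  if s % 2 = 0 then (if j % 2 = 0 then j + 1 else j - 1)
  else if j = 0 then 2
  else if j = 1 then 0
  else if j = 2 then 1
  else if j % 2 = 1 then j + 1
  else j - 1

lemma nxt_lt {s j : ℕ} (hs : s ≠ 1) (h : j < s) : nxt s j < s := by
  unfold nxt; split_ifs <;> omega

lemma nxt_ne {s j : ℕ} (h : j < s) : nxt s j ≠ j := by
  unfold nxt; split_ifs <;> omega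

lemma prv_nxt {s j : ℕ} (h : j < s) : prv s (nxt s j) = j := by
  unfold nxt
  split_ifs with h1 h2 h3 h4 h5 <;> unfold prv <;> split_ifs <;>
    first
    | omega
    | (exfalso; assumption)

lemma nxt_disp {s j : ℕ} (h : j < s) :
    nxt s j = j + 1 ∨ nxt s j = j + 2 ∨ j = nxt s j + 1 ∨ j = nxt s j + 2 := by
  unfold nxt; split_ifs <;> omega

lemma cast_val_self {n : ℕ} [NeZero n] (a : ZMod n) : ((a.val : ℕ) : ZMod n) = a := by
  simp [ZMod.natCast_val, ZMod.cast_id]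

lemma gcd_helper {n d : ℕ} (hodd : Odd n) (h3 : 3 ≤ n)
    (hd : d = 1 ∨ d = 2 ∨ d = n - 1 ∨ d = n - 2) : Nat.gcd n d = 1 := by
  have h2 : Nat.gcd n 2 = 1 := by
    have hdvd2 := Nat.gcd_dvd_right n 2
    have hdvdn := Nat.gcd_dvd_left n 2
    rcases hodd with ⟨k, hk⟩
    rcases (Nat.dvd_prime Nat.prime_two).mp hdvd2 with h | h
    · exact h
    · exfalso; rw [h] at hdvdn; omega
  rcases hd with rfl | rfl | rfl | rfl
  · exact Nat.gcd_one_right n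
  · exact h2
  · have hdvd : Nat.gcd n (n - 1) ∣ 1 := by
      have h1 := Nat.gcd_dvd_left n (n - 1)
      have hh := Nat.gcd_dvd_right n (n - 1)
      have := Nat.dvd_sub h1 hh
      simpa [show n - (n - 1) = 1 by omega] using this
    exact Nat.dvd_one.mp hdvd
  · have hdvd : Nat.gcd n (n - 2) ∣ 2 := by
      have h1 := Nat.gcd_dvd_left n (n - 2)
      have hh := Nat.gcd_dvd_right n (n - 2)
      have := Nat.dvd_sub h1 hh
      simpa [show n - (n - 2) = 2 by omega] using this
    have hg : Nat.gcd n (n - 2) ∣ Nat.gcd n 2 :=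
      Nat.dvd_gcd (Nat.gcd_dvd_left _ _) hdvd
    rw [h2] at hg
    exact Nat.dvd_one.mp hg

lemma gcd_disp' {n : ℕ} [NeZero n] (hodd : Odd n) (h3 : 3 ≤ n) (α β : ZMod n)
    (h : β.val = α.val + 1 ∨ β.val = α.val + 2 ∨ α.val = β.val + 1 ∨ α.val = β.val + 2) :
    Nat.gcd n ((α - β).val) = 1 := by
  have hα := ZMod.val_lt α
  have hβ := ZMod.val_lt β
  have key : α - β = ((α.val + (n - β.val) : ℕ) : ZMod n) := by
    push_cast [Nat.cast_sub hβ.le]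
    rw [ZMod.natCast_self, cast_val_self, cast_val_self]
    ring
  rw [key, ZMod.val_natCast]
  apply gcd_helper hodd h3
  rcases h with h | h | h | h
  · have e : α.val + (n - β.val) = n - 1 := by omega
    rw [e, Nat.mod_eq_of_lt (by omega)]; tauto
  · have e : α.val + (n - β.val) = n - 2 := by omega
    rw [e, Nat.mod_eq_of_lt (by omega)]; tauto
  · have e : α.val + (n - β.val) = n + 1 := by omega
    rw [e, Nat.add_mod_left, Nat.mod_eq_of_lt (by omega)]; tauto
  · have e : α.val + (n - β.val) = n + 2 := by omega
    rw [e, Nat.add_mod_left, Nat.mod_eq_of_lt (by omega)]; tauto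

open Finset in
lemma count_helper {x y : ℕ} [NeZero x] [NeZero y] (P : ℕ → ℕ → Prop)
    [∀ n m, Decidable (P n m)] :
    {p : ZMod x × ZMod y | P p.1.val p.2.val}.ncard
      = ∑ n ∈ Finset.range x, ((Finset.range y).filter (fun m => P n m)).card := by
  classical
  have hset : {p : ZMod x × ZMod y | P p.1.val p.2.val}
      = ↑(Finset.univ.filter fun p : ZMod x × ZMod y => P p.1.val p.2.val) := by
    ext p; simp
  rw [hset, Set.ncard_coe_finset]
  rw [Finset.card_eq_sum_card_fiberwise (f := fun p : ZMod x × ZMod y => p.1.val)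
      (t := Finset.range x) (fun p _ => Finset.mem_range.mpr (ZMod.val_lt p.1))]
  apply Finset.sum_congr rfl
  intro n hn
  simp only [Finset.mem_range] at hn
  apply Finset.card_bij (fun p _ => p.2.val)
  · intro p hp
    simp only [Finset.mem_filter, Finset.mem_univ, true_and] at hp
    simp only [Finset.mem_filter, Finset.mem_range]
    exact ⟨ZMod.val_lt p.2, hp.2 ▸ hp.1⟩
  · intro p hp p' hp' hval
    simp only [Finset.mem_filter, Finset.mem_univ, true_and] at hp hp'
    have h1 : p.1 = p'.1 := ZMod.val_injective _ (by rw [hp.2, hp'.2])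
    exact Prod.ext h1 (ZMod.val_injective _ hval)
  · intro m hm
    simp only [Finset.mem_filter, Finset.mem_range] at hm
    refine ⟨((n : ZMod x), (m : ZMod y)), ?_, ?_⟩
    · simp only [Finset.mem_filter, Finset.mem_univ, true_and,
        ZMod.val_natCast_of_lt hn, ZMod.val_natCast_of_lt hm.1, and_true]
      exact hm.2
    · simp [ZMod.val_natCast_of_lt hm.1]

def fA (x y q c a : ℕ) [NeZero x] [NeZero y] (p : ZMod x × ZMod y) : ZMod x × ZMod y :=
  if p.1.val < q then (p.1, ((nxt y p.2.val : ℕ) : ZMod y))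
  else if p.1.val = q ∧ p.2.val < c then (p.1, ((nxt c p.2.val : ℕ) : ZMod y))
  else if (p.1.val = q + 1 ∨ p.1.val = q + 2) ∧ p.2.val < a then
    (p.1, ((nxt a p.2.val : ℕ) : ZMod y))
  else if p.2.val < c then
    (((q + 1 + nxt (x - (q + 1)) (p.1.val - (q + 1)) : ℕ) : ZMod x), p.2)
  else (((q + nxt (x - q) (p.1.val - q) : ℕ) : ZMod x), p.2)

def gA (x y q c a : ℕ) [NeZero x] [NeZero y] (p : ZMod x × ZMod y) : ZMod x × ZMod y :=
  if p.1.val < q then (p.1, ((prv y p.2.val : ℕ) : ZMod y))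
  else if p.1.val = q ∧ p.2.val < c then (p.1, ((prv c p.2.val : ℕ) : ZMod y))
  else if (p.1.val = q + 1 ∨ p.1.val = q + 2) ∧ p.2.val < a then
    (p.1, ((prv a p.2.val : ℕ) : ZMod y))
  else if p.2.val < c then
    (((q + 1 + prv (x - (q + 1)) (p.1.val - (q + 1)) : ℕ) : ZMod x), p.2)
  else (((q + prv (x - q) (p.1.val - q) : ℕ) : ZMod x), p.2)

section TemplateA

variable {x y q c a : ℕ} [NeZero x] [NeZero y]

lemma gfA (hx3 : 3 ≤ x) (hy3 : 3 ≤ y) (hq : q + 3 ≤ x) (hac : a ≤ c) (hcy : c ≤ y)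
    (ha1 : a ≠ 1) (hc1 : c ≠ 1) (ha0 : a ≠ 0 → q + 3 = x) :
    Function.LeftInverse (gA x y q c a) (fA x y q c a) := by
  intro p
  have hn : p.1.val < x := ZMod.val_lt p.1
  have hm : p.2.val < y := ZMod.val_lt p.2
  unfold fA
  split_ifs with h1 h2 h3 h4
  · -- full vertical column
    have hb : nxt y p.2.val < y := nxt_lt (by omega) hm
    unfold gA
    dsimp only
    rw [if_pos h1, ZMod.val_natCast_of_lt hb, prv_nxt hm, cast_val_self]
  · -- col q vertical interval
    have hc2 : 2 ≤ c := by omega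
    have hb : nxt c p.2.val < c := nxt_lt (by omega) h2.2
    unfold gA
    dsimp only
    rw [ZMod.val_natCast_of_lt (lt_of_lt_of_le hb hcy), if_neg h1,
      if_pos ⟨h2.1, hb⟩, prv_nxt h2.2, cast_val_self]
  · -- cols q+1,q+2 vertical interval
    have ha2 : 2 ≤ a := by omega
    have hb : nxt a p.2.val < a := nxt_lt (by omega) h3.2
    unfold gA
    dsimp only
    rw [ZMod.val_natCast_of_lt (lt_of_lt_of_le hb (le_trans hac hcy)), if_neg h1,
      if_neg (by rintro ⟨hh, -⟩; rcases h3.1 with h | h <;> omega),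
      if_pos ⟨h3.1, hb⟩, prv_nxt h3.2, cast_val_self]
  · -- horizontal, row with m < c
    have hnq : q + 1 ≤ p.1.val := by
      rcases Nat.lt_or_ge p.1.val (q + 1) with h | h
      · exfalso; exact h2 ⟨by omega, h4⟩
      · exact h
    have hma : a ≤ p.2.val := by
      by_contra hcon
      push_neg at hcon
      have hx' := ha0 (by omega)
      exact h3 ⟨by omega, hcon⟩
    have harg : p.1.val - (q + 1) < x - (q + 1) := by omega
    have hb : nxt (x - (q + 1)) (p.1.val - (q + 1)) < x - (q + 1) :=
      nxt_lt (by omega) harg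
    have hcol : q + 1 + nxt (x - (q + 1)) (p.1.val - (q + 1)) < x := by omega
    unfold gA
    dsimp only
    rw [ZMod.val_natCast_of_lt hcol,
      if_neg (by omega),
      if_neg (by rintro ⟨hh, -⟩; omega),
      if_neg (by rintro ⟨-, hh⟩; omega),
      if_pos h4, Nat.add_sub_cancel_left, prv_nxt harg,
      show q + 1 + (p.1.val - (q + 1)) = p.1.val by omega, cast_val_self]
  · -- horizontal, row with m ≥ c
    have hnq : q ≤ p.1.val := by omega
    have hmc : c ≤ p.2.val := by omega
    have harg : p.1.val - q < x - q := by omega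
    have hb : nxt (x - q) (p.1.val - q) < x - q := nxt_lt (by omega) harg
    have hcol : q + nxt (x - q) (p.1.val - q) < x := by omega
    unfold gA
    dsimp only
    rw [ZMod.val_natCast_of_lt hcol,
      if_neg (by omega),
      if_neg (by rintro ⟨-, hh⟩; omega),
      if_neg (by rintro ⟨-, hh⟩; omega),
      if_neg (by omega), Nat.add_sub_cancel_left, prv_nxt harg,
      show q + (p.1.val - q) = p.1.val by omega, cast_val_self]

lemma fixA (hx3 : 3 ≤ x) (hy3 : 3 ≤ y) (hq : q + 3 ≤ x) (hac : a ≤ c) (hcy : c ≤ y)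
    (ha1 : a ≠ 1) (hc1 : c ≠ 1) (ha0 : a ≠ 0 → q + 3 = x) (p : ZMod x × ZMod y) :
    (fA x y q c a p).1 = p.1 ↔
      (p.1.val < q ∨ (p.1.val = q ∧ p.2.val < c) ∨
        ((p.1.val = q + 1 ∨ p.1.val = q + 2) ∧ p.2.val < a)) := by
  have hn : p.1.val < x := ZMod.val_lt p.1
  have hm : p.2.val < y := ZMod.val_lt p.2
  unfold fA
  split_ifs with h1 h2 h3 h4
  · exact iff_of_true rfl (by tauto)
  · exact iff_of_true rfl (by tauto)
  · exact iff_of_true rfl (by tauto)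
  · apply iff_of_false
    · intro hcon
      have hnq : q + 1 ≤ p.1.val := by
        rcases Nat.lt_or_ge p.1.val (q + 1) with h | h
        · exfalso; exact h2 ⟨by omega, h4⟩
        · exact h
      have harg : p.1.val - (q + 1) < x - (q + 1) := by omega
      have hb : nxt (x - (q + 1)) (p.1.val - (q + 1)) < x - (q + 1) :=
        nxt_lt (by omega) harg
      have hcol : q + 1 + nxt (x - (q + 1)) (p.1.val - (q + 1)) < x := by omega
      have := congrArg ZMod.val hcon
      rw [ZMod.val_natCast_of_lt hcol] at this
      have hne := nxt_ne harg
      omega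
    · tauto
  · apply iff_of_false
    · intro hcon
      have hnq : q ≤ p.1.val := by omega
      have harg : p.1.val - q < x - q := by omega
      have hb : nxt (x - q) (p.1.val - q) < x - q := nxt_lt (by omega) harg
      have hcol : q + nxt (x - q) (p.1.val - q) < x := by omega
      have := congrArg ZMod.val hcon
      rw [ZMod.val_natCast_of_lt hcol] at this
      have hne := nxt_ne harg
      omega
    · tauto

lemma condA (hx : Odd x) (hy : Odd y) (hx3 : 3 ≤ x) (hy3 : 3 ≤ y) (hq : q + 3 ≤ x)
    (hac : a ≤ c) (hcy : c ≤ y) (ha1 : a ≠ 1) (hc1 : c ≠ 1) (ha0 : a ≠ 0 → q + 3 = x)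
    (p : ZMod x × ZMod y) :
    ((fA x y q c a p).2 = p.2 ∧ Nat.gcd x ((p.1 - (fA x y q c a p).1).val) = 1) ∨
      ((fA x y q c a p).1 = p.1 ∧ Nat.gcd y ((p.2 - (fA x y q c a p).2).val) = 1) := by
  have hn : p.1.val < x := ZMod.val_lt p.1
  have hm : p.2.val < y := ZMod.val_lt p.2
  unfold fA
  split_ifs with h1 h2 h3 h4
  · right
    refine ⟨rfl, ?_⟩
    have hb : nxt y p.2.val < y := nxt_lt (by omega) hm
    exact gcd_disp' hy hy3 p.2 _
      (by rw [ZMod.val_natCast_of_lt hb]; exact nxt_disp hm)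
  · right
    refine ⟨rfl, ?_⟩
    have hb : nxt c p.2.val < c := nxt_lt (by omega) h2.2
    exact gcd_disp' hy hy3 p.2 _
      (by rw [ZMod.val_natCast_of_lt (by omega : nxt c p.2.val < y)]; exact nxt_disp h2.2)
  · right
    refine ⟨rfl, ?_⟩
    have hb : nxt a p.2.val < a := nxt_lt (by omega) h3.2
    exact gcd_disp' hy hy3 p.2 _
      (by rw [ZMod.val_natCast_of_lt (by omega : nxt a p.2.val < y)]; exact nxt_disp h3.2)
  · left
    refine ⟨rfl, ?_⟩
    have hnq : q + 1 ≤ p.1.val := by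
      rcases Nat.lt_or_ge p.1.val (q + 1) with h | h
      · exfalso; exact h2 ⟨by omega, h4⟩
      · exact h
    have harg : p.1.val - (q + 1) < x - (q + 1) := by omega
    have hb : nxt (x - (q + 1)) (p.1.val - (q + 1)) < x - (q + 1) :=
      nxt_lt (by omega) harg
    have hcol : q + 1 + nxt (x - (q + 1)) (p.1.val - (q + 1)) < x := by omega
    exact gcd_disp' hx hx3 p.1 _
      (by rw [ZMod.val_natCast_of_lt hcol]
          rcases nxt_disp harg with h | h | h | h <;> omega)
  · left
    refine ⟨rfl, ?_⟩
    have hnq : q ≤ p.1.val := by omega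
    have harg : p.1.val - q < x - q := by omega
    have hb : nxt (x - q) (p.1.val - q) < x - q := nxt_lt (by omega) harg
    have hcol : q + nxt (x - q) (p.1.val - q) < x := by omega
    exact gcd_disp' hx hx3 p.1 _
      (by rw [ZMod.val_natCast_of_lt hcol]
          rcases nxt_disp harg with h | h | h | h <;> omega)

end TemplateA

open Finset in
lemma tmplA (x y q c a : ℕ) (hx : Odd x) (hy : Odd y) (hx3 : 3 ≤ x) (hy3 : 3 ≤ y)
    (hq : q + 3 ≤ x) (hac : a ≤ c) (hcy : c ≤ y) (ha1 : a ≠ 1) (hc1 : c ≠ 1)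
    (ha0 : a ≠ 0 → q + 3 = x) :
    ∃ ψ : Equiv.Perm (ZMod x × ZMod y),
      {p : ZMod x × ZMod y | (ψ p).1 = p.1}.ncard = q * y + c + 2 * a ∧
      ∀ p : ZMod x × ZMod y,
        ((ψ p).2 = p.2 ∧ Nat.gcd x ((p.1 - (ψ p).1).val) = 1) ∨
        ((ψ p).1 = p.1 ∧ Nat.gcd y ((p.2 - (ψ p).2).val) = 1) := by
  haveI : NeZero x := ⟨by omega⟩
  haveI : NeZero y := ⟨by omega⟩
  have hinj : Function.Injective (fA x y q c a) :=
    (gfA hx3 hy3 hq hac hcy ha1 hc1 ha0).injective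
  have hbij : Function.Bijective (fA x y q c a) :=
    Finite.injective_iff_bijective.mp hinj
  refine ⟨Equiv.ofBijective _ hbij, ?_, ?_⟩
  · have hset : {p : ZMod x × ZMod y | ((Equiv.ofBijective _ hbij) p).1 = p.1}
        = {p : ZMod x × ZMod y |
            (fun n m => n < q ∨ (n = q ∧ m < c) ∨ ((n = q + 1 ∨ n = q + 2) ∧ m < a))
              p.1.val p.2.val} := by
      ext p
      exact fixA hx3 hy3 hq hac hcy ha1 hc1 ha0 p
    rw [hset, count_helper
      (fun n m => n < q ∨ (n = q ∧ m < c) ∨ ((n = q + 1 ∨ n = q + 2) ∧ m < a))]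
    have hsum : ∀ n ∈ Finset.range x,
        ((Finset.range y).filter
          (fun m => n < q ∨ (n = q ∧ m < c) ∨ ((n = q + 1 ∨ n = q + 2) ∧ m < a))).card
        = (if n < q then y else 0) + (if n = q then c else 0)
          + (if n = q + 1 then a else 0) + (if n = q + 2 then a else 0) := by
      intro n hn
      rw [Finset.mem_range] at hn
      by_cases hn1 : n < q
      · rw [Finset.filter_true_of_mem (fun m _ => Or.inl hn1), Finset.card_range]
        split_ifs <;> omega
      · by_cases hn2 : n = q
        · have he : (Finset.range y).filter
              (fun m => n < q ∨ (n = q ∧ m < c) ∨ ((n = q + 1 ∨ n = q + 2) ∧ m < a))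
              = Finset.range c := by
            ext k
            simp only [Finset.mem_filter, Finset.mem_range]
            constructor
            · rintro ⟨hk, h | ⟨-, h⟩ | ⟨hh, -⟩⟩ <;> omega
            · intro hk; exact ⟨by omega, Or.inr (Or.inl ⟨hn2, hk⟩)⟩
          rw [he, Finset.card_range]
          split_ifs <;> omega
        · by_cases hn3 : n = q + 1 ∨ n = q + 2
          · have he : (Finset.range y).filter
                (fun m => n < q ∨ (n = q ∧ m < c) ∨ ((n = q + 1 ∨ n = q + 2) ∧ m < a))
                = Finset.range a := by
              ext k
              simp only [Finset.mem_filter, Finset.mem_range]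
              constructor
              · rintro ⟨hk, h | ⟨h, -⟩ | ⟨-, h⟩⟩ <;> omega
              · intro hk; exact ⟨by omega, Or.inr (Or.inr ⟨hn3, hk⟩)⟩
            rw [he, Finset.card_range]
            rcases hn3 with h | h <;> split_ifs <;> omega
          · have he : (Finset.range y).filter
                (fun m => n < q ∨ (n = q ∧ m < c) ∨ ((n = q + 1 ∨ n = q + 2) ∧ m < a))
                = ∅ := by
              apply Finset.filter_false_of_mem
              intro k hk
              push_neg
              refine ⟨by omega, fun h => absurd h hn2, fun h => absurd h hn3⟩
            rw [he, Finset.card_empty]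
            split_ifs <;> omega
    rw [Finset.sum_congr rfl hsum, Finset.sum_add_distrib, Finset.sum_add_distrib,
      Finset.sum_add_distrib]
    have s1 : ∑ n ∈ Finset.range x, (if n < q then y else 0) = q * y := by
      rw [← Finset.sum_filter]
      have : (Finset.range x).filter (· < q) = Finset.range q := by
        ext k; simp only [Finset.mem_filter, Finset.mem_range]; omega
      rw [this, Finset.sum_const, Finset.card_range, smul_eq_mul]
    have s2 : ∑ n ∈ Finset.range x, (if n = q then c else 0) = c := by
      rw [Finset.sum_ite_eq' (Finset.range x) q (fun _ => c),
        if_pos (Finset.mem_range.mpr (by omega))]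
    have s3 : ∑ n ∈ Finset.range x, (if n = q + 1 then a else 0) = a := by
      rw [Finset.sum_ite_eq' (Finset.range x) (q + 1) (fun _ => a),
        if_pos (Finset.mem_range.mpr (by omega))]
    have s4 : ∑ n ∈ Finset.range x, (if n = q + 2 then a else 0) = a := by
      rw [Finset.sum_ite_eq' (Finset.range x) (q + 2) (fun _ => a),
        if_pos (Finset.mem_range.mpr (by omega))]
    rw [s1, s2, s3, s4]
    omega
  · intro p
    exact condA hx hy hx3 hy3 hq hac hcy ha1 hc1 ha0 p

def fB (x y q s a : ℕ) [NeZero x] [NeZero y] (p : ZMod x × ZMod y) : ZMod x × ZMod y :=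
  if p.1.val < q then (p.1, ((nxt y p.2.val : ℕ) : ZMod y))
  else if p.1.val = q ∧ p.2.val < s then
    (if p.2.val + 1 = s then (((q + 1 : ℕ) : ZMod x), p.2)
     else (p.1, ((p.2.val + 1 : ℕ) : ZMod y)))
  else if p.1.val = q + 1 ∧ p.2.val < s then
    (if p.2.val = 0 then (((q : ℕ) : ZMod x), p.2)
     else (p.1, ((p.2.val - 1 : ℕ) : ZMod y)))
  else if p.1.val = q + 2 ∧ p.2.val < a then (p.1, ((nxt a p.2.val : ℕ) : ZMod y))
  else if p.2.val < s then
    (((q + 2 + nxt (x - (q + 2)) (p.1.val - (q + 2)) : ℕ) : ZMod x), p.2)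
  else if p.2.val < a then
    ((((if p.1.val = q then q + 1 else q) : ℕ) : ZMod x), p.2)
  else (((q + nxt (x - q) (p.1.val - q) : ℕ) : ZMod x), p.2)

def gB (x y q s a : ℕ) [NeZero x] [NeZero y] (p : ZMod x × ZMod y) : ZMod x × ZMod y :=
  if p.1.val < q then (p.1, ((prv y p.2.val : ℕ) : ZMod y))
  else if p.1.val = q ∧ p.2.val < s then
    (if p.2.val = 0 then (((q + 1 : ℕ) : ZMod x), p.2)
     else (p.1, ((p.2.val - 1 : ℕ) : ZMod y)))
  else if p.1.val = q + 1 ∧ p.2.val < s then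
    (if p.2.val + 1 = s then (((q : ℕ) : ZMod x), p.2)
     else (p.1, ((p.2.val + 1 : ℕ) : ZMod y)))
  else if p.1.val = q + 2 ∧ p.2.val < a then (p.1, ((prv a p.2.val : ℕ) : ZMod y))
  else if p.2.val < s then
    (((q + 2 + prv (x - (q + 2)) (p.1.val - (q + 2)) : ℕ) : ZMod x), p.2)
  else if p.2.val < a then
    ((((if p.1.val = q then q + 1 else q) : ℕ) : ZMod x), p.2)
  else (((q + prv (x - q) (p.1.val - q) : ℕ) : ZMod x), p.2)

section TemplateB

variable {x y q s a : ℕ} [NeZero x] [NeZero y]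

lemma gfB (hx3 : 3 ≤ x) (hy3 : 3 ≤ y) (hq2 : q + 2 ≤ x) (hs2 : 2 ≤ s) (hsy : s ≤ y)
    (ha1 : a ≠ 1) (hay : a ≤ y) (hsa : a ≠ 0 → s ≤ a ∧ q + 3 = x)
    (ha0 : a = 0 → q + 2 = x ∨ q + 4 ≤ x) :
    Function.LeftInverse (gB x y q s a) (fB x y q s a) := by
  intro p
  have hn : p.1.val < x := ZMod.val_lt p.1
  have hm : p.2.val < y := ZMod.val_lt p.2
  unfold fB
  split_ifs with h1 h2 hm1 h3 hm0 h4 h5 h6 hq7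
  · -- full vertical column
    have hb : nxt y p.2.val < y := nxt_lt (by omega) hm
    unfold gB
    dsimp only
    rw [if_pos h1, ZMod.val_natCast_of_lt hb, prv_nxt hm, cast_val_self]
  · -- snake top of left column
    unfold gB
    dsimp only
    rw [ZMod.val_natCast_of_lt (show q + 1 < x by omega),
      if_neg (by omega),
      if_neg (by rintro ⟨hh, -⟩; omega),
      if_pos ⟨rfl, by omega⟩,
      if_pos hm1]
    rw [← h2.1, cast_val_self]
  · -- snake up-move in left column
    unfold gB
    dsimp only
    rw [ZMod.val_natCast_of_lt (show p.2.val + 1 < y by omega),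
      if_neg h1,
      if_pos ⟨h2.1, by omega⟩,
      if_neg (by omega),
      show p.2.val + 1 - 1 = p.2.val by omega, cast_val_self]
  · -- snake bottom of right column
    unfold gB
    dsimp only
    rw [ZMod.val_natCast_of_lt (show q < x by omega),
      if_neg (by omega),
      if_pos ⟨rfl, by omega⟩,
      if_pos hm0]
    rw [← h3.1, cast_val_self]
  · -- snake down-move in right column
    unfold gB
    dsimp only
    rw [ZMod.val_natCast_of_lt (show p.2.val - 1 < y by omega),
      if_neg h1,
      if_neg (by rintro ⟨hh, -⟩; omega),
      if_pos ⟨h3.1, by omega⟩,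
      if_neg (by omega),
      show p.2.val - 1 + 1 = p.2.val by omega, cast_val_self]
  · -- col q+2 vertical interval
    have ha2 : 2 ≤ a := by omega
    have hb : nxt a p.2.val < a := nxt_lt (by omega) h4.2
    unfold gB
    dsimp only
    rw [ZMod.val_natCast_of_lt (show nxt a p.2.val < y by omega),
      if_neg (by omega),
      if_neg (by rintro ⟨hh, -⟩; omega),
      if_neg (by rintro ⟨hh, -⟩; omega),
      if_pos ⟨h4.1, hb⟩, prv_nxt h4.2, cast_val_self]
  · -- horizontal right zone, rows m < s
    have hnq : q + 2 ≤ p.1.val := by omega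
    have ha' : a = 0 := by
      by_contra hcon
      obtain ⟨hsa1, hsa2⟩ := hsa hcon
      omega
    have hx4 : q + 4 ≤ x := by
      rcases ha0 ha' with h | h <;> omega
    have harg : p.1.val - (q + 2) < x - (q + 2) := by omega
    have hb : nxt (x - (q + 2)) (p.1.val - (q + 2)) < x - (q + 2) :=
      nxt_lt (by omega) harg
    have hcol : q + 2 + nxt (x - (q + 2)) (p.1.val - (q + 2)) < x := by omega
    unfold gB
    dsimp only
    rw [ZMod.val_natCast_of_lt hcol,
      if_neg (by omega),
      if_neg (by rintro ⟨hh, -⟩; omega),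
      if_neg (by rintro ⟨hh, -⟩; omega),
      if_neg (by rintro ⟨-, hh⟩; omega),
      if_pos h5, Nat.add_sub_cancel_left, prv_nxt harg,
      show q + 2 + (p.1.val - (q + 2)) = p.1.val by omega, cast_val_self]
  · -- swap zone, rows s ≤ m < a, n = q
    have ha' : a ≠ 0 := by omega
    obtain ⟨hsa1, hsa2⟩ := hsa ha'
    unfold gB
    dsimp only
    rw [ZMod.val_natCast_of_lt (show q + 1 < x by omega),
      if_neg (by omega),
      if_neg (by rintro ⟨hh, -⟩; omega),
      if_neg (by rintro ⟨-, hh⟩; omega),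
      if_neg (by rintro ⟨hh, -⟩; omega),
      if_neg (by omega),
      if_pos h6,
      if_neg (by omega)]
    rw [← hq7, cast_val_self]
  · -- swap zone, rows s ≤ m < a, n = q+1
    have ha' : a ≠ 0 := by omega
    obtain ⟨hsa1, hsa2⟩ := hsa ha'
    have hnn : p.1.val = q + 1 := by omega
    unfold gB
    dsimp only
    rw [ZMod.val_natCast_of_lt (show q < x by omega),
      if_neg (by omega),
      if_neg (by rintro ⟨-, hh⟩; omega),
      if_neg (by rintro ⟨hh, -⟩; omega),
      if_neg (by rintro ⟨hh, -⟩; omega),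
      if_neg (by omega),
      if_pos h6,
      if_pos rfl]
    rw [← hnn, cast_val_self]
  · -- horizontal bottom-free zone, rows m ≥ max s a
    have hnq : q ≤ p.1.val := by omega
    have harg : p.1.val - q < x - q := by omega
    have hb : nxt (x - q) (p.1.val - q) < x - q := nxt_lt (by omega) harg
    have hcol : q + nxt (x - q) (p.1.val - q) < x := by omega
    unfold gB
    dsimp only
    rw [ZMod.val_natCast_of_lt hcol,
      if_neg (by omega),
      if_neg (by rintro ⟨-, hh⟩; omega),
      if_neg (by rintro ⟨-, hh⟩; omega),
      if_neg (by rintro ⟨-, hh⟩; omega),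
      if_neg (by omega),
      if_neg (by omega),
      Nat.add_sub_cancel_left, prv_nxt harg,
      show q + (p.1.val - q) = p.1.val by omega, cast_val_self]

lemma fixB (hx3 : 3 ≤ x) (hy3 : 3 ≤ y) (hq2 : q + 2 ≤ x) (hs2 : 2 ≤ s) (hsy : s ≤ y)
    (ha1 : a ≠ 1) (hay : a ≤ y) (hsa : a ≠ 0 → s ≤ a ∧ q + 3 = x)
    (ha0 : a = 0 → q + 2 = x ∨ q + 4 ≤ x) (p : ZMod x × ZMod y) :
    (fB x y q s a p).1 = p.1 ↔
      (p.1.val < q ∨ (p.1.val = q ∧ p.2.val + 1 < s) ∨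
        (p.1.val = q + 1 ∧ 1 ≤ p.2.val ∧ p.2.val < s) ∨
        (p.1.val = q + 2 ∧ p.2.val < a)) := by
  have hn : p.1.val < x := ZMod.val_lt p.1
  have hm : p.2.val < y := ZMod.val_lt p.2
  unfold fB
  split_ifs with h1 h2 hm1 h3 hm0 h4 h5 h6 hq7
  · exact iff_of_true rfl (by tauto)
  · apply iff_of_false
    · intro hcon
      have := congrArg ZMod.val hcon
      rw [ZMod.val_natCast_of_lt (show q + 1 < x by omega)] at this
      omega
    · rintro (h | ⟨-, h⟩ | ⟨h, -⟩ | ⟨h, -⟩) <;> omega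
  · exact iff_of_true rfl (by omega)
  · apply iff_of_false
    · intro hcon
      have := congrArg ZMod.val hcon
      rw [ZMod.val_natCast_of_lt (show q < x by omega)] at this
      omega
    · rintro (h | ⟨h, -⟩ | ⟨-, h, -⟩ | ⟨h, -⟩) <;> omega
  · exact iff_of_true rfl (by omega)
  · exact iff_of_true rfl (by tauto)
  · apply iff_of_false
    · intro hcon
      have hnq : q + 2 ≤ p.1.val := by omega
      have ha' : a = 0 := by
        by_contra hcon2
        obtain ⟨hsa1, hsa2⟩ := hsa hcon2
        omega
      have hx4 : q + 4 ≤ x := by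
        rcases ha0 ha' with h | h <;> omega
      have harg : p.1.val - (q + 2) < x - (q + 2) := by omega
      have hb : nxt (x - (q + 2)) (p.1.val - (q + 2)) < x - (q + 2) :=
        nxt_lt (by omega) harg
      have hcol : q + 2 + nxt (x - (q + 2)) (p.1.val - (q + 2)) < x := by omega
      have := congrArg ZMod.val hcon
      rw [ZMod.val_natCast_of_lt hcol] at this
      have hne := nxt_ne harg
      omega
    · rintro (h | ⟨h, hh⟩ | ⟨h, -⟩ | hcc) <;> first | omega | exact h4 hcc
  · apply iff_of_false
    · intro hcon
      have := congrArg ZMod.val hcon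
      rw [ZMod.val_natCast_of_lt (show q + 1 < x by omega)] at this
      omega
    · rintro (h | ⟨h, hh⟩ | ⟨h, -, hh⟩ | ⟨h, -⟩) <;> omega
  · apply iff_of_false
    · intro hcon
      have ha' : a ≠ 0 := by omega
      obtain ⟨hsa1, hsa2⟩ := hsa ha'
      have hnn : p.1.val = q + 1 := by omega
      have := congrArg ZMod.val hcon
      rw [ZMod.val_natCast_of_lt (show q < x by omega)] at this
      omega
    · rintro (h | ⟨h, hh⟩ | ⟨h, -, hh⟩ | ⟨h, -⟩) <;> omega
  · apply iff_of_false
    · intro hcon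
      have hnq : q ≤ p.1.val := by omega
      have harg : p.1.val - q < x - q := by omega
      have hb : nxt (x - q) (p.1.val - q) < x - q := nxt_lt (by omega) harg
      have hcol : q + nxt (x - q) (p.1.val - q) < x := by omega
      have := congrArg ZMod.val hcon
      rw [ZMod.val_natCast_of_lt hcol] at this
      have hne := nxt_ne harg
      omega
    · rintro (h | ⟨-, h⟩ | ⟨-, -, h⟩ | ⟨-, h⟩) <;> omega

lemma condB (hx : Odd x) (hy : Odd y) (hx3 : 3 ≤ x) (hy3 : 3 ≤ y) (hq2 : q + 2 ≤ x)
    (hs2 : 2 ≤ s) (hsy : s ≤ y) (ha1 : a ≠ 1) (hay : a ≤ y)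
    (hsa : a ≠ 0 → s ≤ a ∧ q + 3 = x) (ha0 : a = 0 → q + 2 = x ∨ q + 4 ≤ x)
    (p : ZMod x × ZMod y) :
    ((fB x y q s a p).2 = p.2 ∧ Nat.gcd x ((p.1 - (fB x y q s a p).1).val) = 1) ∨
      ((fB x y q s a p).1 = p.1 ∧ Nat.gcd y ((p.2 - (fB x y q s a p).2).val) = 1) := by
  have hn : p.1.val < x := ZMod.val_lt p.1
  have hm : p.2.val < y := ZMod.val_lt p.2
  unfold fB
  split_ifs with h1 h2 hm1 h3 hm0 h4 h5 h6 hq7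
  · right
    refine ⟨rfl, ?_⟩
    have hb : nxt y p.2.val < y := nxt_lt (by omega) hm
    exact gcd_disp' hy hy3 p.2 _
      (by rw [ZMod.val_natCast_of_lt hb]; exact nxt_disp hm)
  · left
    refine ⟨rfl, ?_⟩
    exact gcd_disp' hx hx3 p.1 _
      (by rw [ZMod.val_natCast_of_lt (show q + 1 < x by omega)]; omega)
  · right
    refine ⟨rfl, ?_⟩
    exact gcd_disp' hy hy3 p.2 _
      (by rw [ZMod.val_natCast_of_lt (show p.2.val + 1 < y by omega)]; omega)
  · left
    refine ⟨rfl, ?_⟩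
    exact gcd_disp' hx hx3 p.1 _
      (by rw [ZMod.val_natCast_of_lt (show q < x by omega)]; omega)
  · right
    refine ⟨rfl, ?_⟩
    exact gcd_disp' hy hy3 p.2 _
      (by rw [ZMod.val_natCast_of_lt (show p.2.val - 1 < y by omega)]; omega)
  · right
    refine ⟨rfl, ?_⟩
    have ha2 : 2 ≤ a := by omega
    have hb : nxt a p.2.val < a := nxt_lt (by omega) h4.2
    exact gcd_disp' hy hy3 p.2 _
      (by rw [ZMod.val_natCast_of_lt (show nxt a p.2.val < y by omega)]
          exact nxt_disp h4.2)
  · left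
    refine ⟨rfl, ?_⟩
    have hnq : q + 2 ≤ p.1.val := by omega
    have ha' : a = 0 := by
      by_contra hcon
      obtain ⟨hsa1, hsa2⟩ := hsa hcon
      omega
    have hx4 : q + 4 ≤ x := by
      rcases ha0 ha' with h | h <;> omega
    have harg : p.1.val - (q + 2) < x - (q + 2) := by omega
    have hb : nxt (x - (q + 2)) (p.1.val - (q + 2)) < x - (q + 2) :=
      nxt_lt (by omega) harg
    have hcol : q + 2 + nxt (x - (q + 2)) (p.1.val - (q + 2)) < x := by omega
    exact gcd_disp' hx hx3 p.1 _
      (by rw [ZMod.val_natCast_of_lt hcol]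
          rcases nxt_disp harg with h | h | h | h <;> omega)
  · left
    refine ⟨rfl, ?_⟩
    exact gcd_disp' hx hx3 p.1 _
      (by rw [ZMod.val_natCast_of_lt (show q + 1 < x by omega)]; omega)
  · left
    refine ⟨rfl, ?_⟩
    have ha' : a ≠ 0 := by omega
    obtain ⟨hsa1, hsa2⟩ := hsa ha'
    have hnn : p.1.val = q + 1 := by omega
    exact gcd_disp' hx hx3 p.1 _
      (by rw [ZMod.val_natCast_of_lt (show q < x by omega)]; omega)
  · left
    refine ⟨rfl, ?_⟩
    have hnq : q ≤ p.1.val := by omega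
    have harg : p.1.val - q < x - q := by omega
    have hb : nxt (x - q) (p.1.val - q) < x - q := nxt_lt (by omega) harg
    have hcol : q + nxt (x - q) (p.1.val - q) < x := by omega
    exact gcd_disp' hx hx3 p.1 _
      (by rw [ZMod.val_natCast_of_lt hcol]
          rcases nxt_disp harg with h | h | h | h <;> omega)

end TemplateB

open Finset in
lemma tmplB (x y q s a : ℕ) (hx : Odd x) (hy : Odd y) (hx3 : 3 ≤ x) (hy3 : 3 ≤ y)
    (hq2 : q + 2 ≤ x) (hs2 : 2 ≤ s) (hsy : s ≤ y) (ha1 : a ≠ 1) (hay : a ≤ y)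
    (hsa : a ≠ 0 → s ≤ a ∧ q + 3 = x) (ha0 : a = 0 → q + 2 = x ∨ q + 4 ≤ x) :
    ∃ ψ : Equiv.Perm (ZMod x × ZMod y),
      {p : ZMod x × ZMod y | (ψ p).1 = p.1}.ncard = q * y + (s - 1) + (s - 1) + a ∧
      ∀ p : ZMod x × ZMod y,
        ((ψ p).2 = p.2 ∧ Nat.gcd x ((p.1 - (ψ p).1).val) = 1) ∨
        ((ψ p).1 = p.1 ∧ Nat.gcd y ((p.2 - (ψ p).2).val) = 1) := by
  haveI : NeZero x := ⟨by omega⟩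
  haveI : NeZero y := ⟨by omega⟩
  have hinj : Function.Injective (fB x y q s a) :=
    (gfB hx3 hy3 hq2 hs2 hsy ha1 hay hsa ha0).injective
  have hbij : Function.Bijective (fB x y q s a) :=
    Finite.injective_iff_bijective.mp hinj
  refine ⟨Equiv.ofBijective _ hbij, ?_, ?_⟩
  · have hset : {p : ZMod x × ZMod y | ((Equiv.ofBijective _ hbij) p).1 = p.1}
        = {p : ZMod x × ZMod y |
            (fun n m => n < q ∨ (n = q ∧ m + 1 < s) ∨ (n = q + 1 ∧ 1 ≤ m ∧ m < s) ∨
              (n = q + 2 ∧ m < a)) p.1.val p.2.val} := by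
      ext p
      exact fixB hx3 hy3 hq2 hs2 hsy ha1 hay hsa ha0 p
    rw [hset, count_helper
      (fun n m => n < q ∨ (n = q ∧ m + 1 < s) ∨ (n = q + 1 ∧ 1 ≤ m ∧ m < s) ∨
        (n = q + 2 ∧ m < a))]
    have hsum : ∀ n ∈ Finset.range x,
        ((Finset.range y).filter
          (fun m => n < q ∨ (n = q ∧ m + 1 < s) ∨ (n = q + 1 ∧ 1 ≤ m ∧ m < s) ∨
            (n = q + 2 ∧ m < a))).card
        = (if n < q then y else 0) + (if n = q then s - 1 else 0)
          + (if n = q + 1 then s - 1 else 0) + (if n = q + 2 then a else 0) := by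
      intro n hn
      rw [Finset.mem_range] at hn
      by_cases hn1 : n < q
      · rw [Finset.filter_true_of_mem (fun m _ => Or.inl hn1), Finset.card_range]
        split_ifs <;> omega
      · by_cases hn2 : n = q
        · have he : (Finset.range y).filter
              (fun m => n < q ∨ (n = q ∧ m + 1 < s) ∨ (n = q + 1 ∧ 1 ≤ m ∧ m < s) ∨
                (n = q + 2 ∧ m < a))
              = Finset.range (s - 1) := by
            ext k
            simp only [Finset.mem_filter, Finset.mem_range]
            constructor
            · rintro ⟨hk, h | ⟨-, h⟩ | ⟨h, -⟩ | ⟨h, -⟩⟩ <;> omega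
            · intro hk; exact ⟨by omega, Or.inr (Or.inl ⟨hn2, by omega⟩)⟩
          rw [he, Finset.card_range]
          split_ifs <;> omega
        · by_cases hn3 : n = q + 1
          · have he : (Finset.range y).filter
                (fun m => n < q ∨ (n = q ∧ m + 1 < s) ∨ (n = q + 1 ∧ 1 ≤ m ∧ m < s) ∨
                  (n = q + 2 ∧ m < a))
                = Finset.Ico 1 s := by
              ext k
              simp only [Finset.mem_filter, Finset.mem_range, Finset.mem_Ico]
              constructor
              · rintro ⟨hk, h | ⟨h, -⟩ | ⟨-, h1, h2⟩ | ⟨h, -⟩⟩ <;> omega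
              · intro hk; exact ⟨by omega, Or.inr (Or.inr (Or.inl ⟨hn3, hk.1, hk.2⟩))⟩
            rw [he, Nat.card_Ico]
            split_ifs <;> omega
          · by_cases hn4 : n = q + 2
            · have he : (Finset.range y).filter
                  (fun m => n < q ∨ (n = q ∧ m + 1 < s) ∨ (n = q + 1 ∧ 1 ≤ m ∧ m < s) ∨
                    (n = q + 2 ∧ m < a))
                  = Finset.range a := by
                ext k
                simp only [Finset.mem_filter, Finset.mem_range]
                constructor
                · rintro ⟨hk, h | ⟨h, -⟩ | ⟨h, -⟩ | ⟨-, h⟩⟩ <;> omega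
                · intro hk; exact ⟨by omega, Or.inr (Or.inr (Or.inr ⟨hn4, hk⟩))⟩
              rw [he, Finset.card_range]
              split_ifs <;> omega
            · have he : (Finset.range y).filter
                  (fun m => n < q ∨ (n = q ∧ m + 1 < s) ∨ (n = q + 1 ∧ 1 ≤ m ∧ m < s) ∨
                    (n = q + 2 ∧ m < a))
                  = ∅ := by
                apply Finset.filter_false_of_mem
                intro k hk
                push_neg
                exact ⟨by omega, fun h => absurd h hn2, fun h => absurd h hn3,
                  fun h => absurd h hn4⟩
              rw [he, Finset.card_empty]
              split_ifs <;> omega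
    rw [Finset.sum_congr rfl hsum, Finset.sum_add_distrib, Finset.sum_add_distrib,
      Finset.sum_add_distrib]
    have s1 : ∑ n ∈ Finset.range x, (if n < q then y else 0) = q * y := by
      rw [← Finset.sum_filter]
      have : (Finset.range x).filter (· < q) = Finset.range q := by
        ext k; simp only [Finset.mem_filter, Finset.mem_range]; omega
      rw [this, Finset.sum_const, Finset.card_range, smul_eq_mul]
    have s2 : ∑ n ∈ Finset.range x, (if n = q then s - 1 else 0) = s - 1 := by
      rw [Finset.sum_ite_eq' (Finset.range x) q (fun _ => s - 1),
        if_pos (Finset.mem_range.mpr (by omega))]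
    have s3 : ∑ n ∈ Finset.range x, (if n = q + 1 then s - 1 else 0) = s - 1 := by
      rw [Finset.sum_ite_eq' (Finset.range x) (q + 1) (fun _ => s - 1),
        if_pos (Finset.mem_range.mpr (by omega))]
    have s4 : ∑ n ∈ Finset.range x, (if n = q + 2 then a else 0) = a := by
      rcases Nat.lt_or_ge (q + 2) x with h | h
      · rw [Finset.sum_ite_eq' (Finset.range x) (q + 2) (fun _ => a),
          if_pos (Finset.mem_range.mpr h)]
      · have ha' : a = 0 := by
          by_contra hcon
          have := (hsa hcon).2
          omega
        rw [Finset.sum_ite_eq' (Finset.range x) (q + 2) (fun _ => a),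
          if_neg (by simp only [Finset.mem_range]; omega), ha']
    rw [s1, s2, s3, s4]
  · intro p
    exact condB hx hy hx3 hy3 hq2 hs2 hsy ha1 hay hsa ha0 p

/-- For odd `x, y ≥ 3` and `r_p ≤ xy` with `r_p ∉ {1, xy−1}`, there is a bijection `ψ`
of `Z_x × Z_y` with exactly `r_p` elements satisfying `ψ₁(i,α) = i`, such that every
`(i,α)` satisfies: either `ψ₂(i,α) = α` and `gcd(x, i − ψ₁(i,α)) = 1`, or
`ψ₁(i,α) = i` and `gcd(y, α − ψ₂(i,α)) = 1`. -/
theorem stmt15 (x y r : ℕ) (hx : Odd x) (hy : Odd y) (hx3 : 3 ≤ x) (hy3 : 3 ≤ y)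
    (hr : r ≤ x * y) (hr1 : r ≠ 1) (hr2 : r ≠ x * y - 1) :
    ∃ ψ : Equiv.Perm (ZMod x × ZMod y),
      {p : ZMod x × ZMod y | (ψ p).1 = p.1}.ncard = r ∧
      ∀ p : ZMod x × ZMod y,
        ((ψ p).2 = p.2 ∧ Nat.gcd x (p.1 - (ψ p).1).val = 1) ∨
        ((ψ p).1 = p.1 ∧ Nat.gcd y (p.2 - (ψ p).2).val = 1) := by
  obtain ⟨l, hl⟩ := hy
  subst hl
  set y := 2 * l + 1 with hy_def
  have hy' : Odd y := ⟨l, rfl⟩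
  have hl1 : 1 ≤ l := by omega
  obtain ⟨Q, T, hdiv, hT⟩ : ∃ Q T, y * Q + T = r ∧ T < y :=
    ⟨r / y, r % y, Nat.div_add_mod r y, Nat.mod_lt r (by omega)⟩
  have hQx : Q ≤ x := by
    rcases Nat.lt_or_ge x Q with h | h
    · exfalso
      have h2 : y * (x + 1) ≤ y * Q := Nat.mul_le_mul_left y (by omega)
      have h3 : y * (x + 1) = x * y + y := by ring
      linarith
    · exact h
  have hTcase : T = 0 ∨ T = 1 ∨ (∃ u, T = 2 * u + 2) ∨ (∃ u, T = 2 * u + 3) := by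
    rcases Nat.even_or_odd T with ⟨u, hu⟩ | ⟨u, hu⟩
    · rcases Nat.eq_zero_or_pos T with h0 | hpos
      · exact Or.inl h0
      · exact Or.inr (Or.inr (Or.inl ⟨u - 1, by omega⟩))
    · rcases Nat.lt_or_ge T 2 with h0 | hge
      · exact Or.inr (Or.inl (by omega))
      · exact Or.inr (Or.inr (Or.inr ⟨u - 1, by omega⟩))
  have hxQ : Q + 3 ≤ x ∨ x = Q + 2 ∨ x = Q + 1 ∨ x = Q := by omega
  rcases hTcase with rfl | rfl | ⟨u, rfl⟩ | ⟨u, rfl⟩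
  · -- T = 0
    rcases hxQ with hA | hB | hC | hD
    · obtain ⟨ψ, h1, h2⟩ := tmplA x y Q 0 0 hx hy' hx3 hy3 hA (by omega) (by omega)
        (by omega) (by omega) (fun h => absurd rfl h)
      refine ⟨ψ, ?_, h2⟩
      rw [h1]; linarith
    · obtain ⟨q, hq⟩ : ∃ q, Q = q + 1 := ⟨Q - 1, by omega⟩
      subst hq
      obtain ⟨ψ, h1, h2⟩ := tmplA x y q y 0 hx hy' hx3 hy3 (by omega) (by omega)
        (by omega) (by omega) (by omega) (fun h => absurd rfl h)
      refine ⟨ψ, ?_, h2⟩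
      rw [h1]; linarith
    · obtain ⟨q, hq⟩ : ∃ q, Q = q + 2 := ⟨Q - 2, by omega⟩
      subst hq
      obtain ⟨ψ, h1, h2⟩ := tmplA x y q (2 * l) (l + 1) hx hy' hx3 hy3 (by omega)
        (by omega) (by omega) (by omega) (by omega) (fun _ => by omega)
      refine ⟨ψ, ?_, h2⟩
      rw [h1]; linarith
    · obtain ⟨q, hq⟩ : ∃ q, Q = q + 3 := ⟨Q - 3, by omega⟩
      subst hq
      obtain ⟨ψ, h1, h2⟩ := tmplA x y q y y hx hy' hx3 hy3 (by omega) (by omega)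
        (by omega) (by omega) (by omega) (fun _ => by omega)
      refine ⟨ψ, ?_, h2⟩
      rw [h1]; linarith
  · -- T = 1
    have hQ1 : 1 ≤ Q := by
      by_contra hq0
      have h0 : Q = 0 := by omega
      rw [h0, Nat.mul_zero] at hdiv
      omega
    obtain ⟨q, hq⟩ : ∃ q, Q = q + 1 := ⟨Q - 1, by omega⟩
    subst hq
    rcases hxQ with hA | hB | hC | hD
    · obtain ⟨ψ, h1, h2⟩ := tmplB x y q (l + 2) 0 hx hy' hx3 hy3 (by omega) (by omega)
        (by omega) (by omega) (by omega) (fun h => absurd rfl h)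
        (fun _ => Or.inr (by omega))
      refine ⟨ψ, ?_, h2⟩
      rw [h1, show l + 2 - 1 = l + 1 by omega]; linarith
    · obtain ⟨ψ, h1, h2⟩ := tmplB x y q 2 (2 * l) hx hy' hx3 hy3 (by omega) (by omega)
        (by omega) (by omega) (by omega) (fun _ => ⟨by omega, by omega⟩)
        (fun h => absurd h (by omega))
      refine ⟨ψ, ?_, h2⟩
      rw [h1, show (2 : ℕ) - 1 = 1 by omega]; linarith
    · obtain ⟨ψ, h1, h2⟩ := tmplB x y q (l + 2) 0 hx hy' hx3 hy3 (by omega) (by omega)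
        (by omega) (by omega) (by omega) (fun h => absurd rfl h)
        (fun _ => Or.inl (by omega))
      refine ⟨ψ, ?_, h2⟩
      rw [h1, show l + 2 - 1 = l + 1 by omega]; linarith
    · exfalso
      subst hD
      linarith
  · -- T = 2u + 2
    have hu1 : u + 1 ≤ l := by omega
    rcases hxQ with hA | hB | hC | hD
    · obtain ⟨ψ, h1, h2⟩ := tmplA x y Q (2 * u + 2) 0 hx hy' hx3 hy3 hA (by omega)
        (by omega) (by omega) (by omega) (fun h => absurd rfl h)
      refine ⟨ψ, ?_, h2⟩
      rw [h1]; linarith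
    · obtain ⟨ψ, h1, h2⟩ := tmplB x y Q (u + 2) 0 hx hy' hx3 hy3 (by omega) (by omega)
        (by omega) (by omega) (by omega) (fun h => absurd rfl h)
        (fun _ => Or.inl (by omega))
      refine ⟨ψ, ?_, h2⟩
      rw [h1, show u + 2 - 1 = u + 1 by omega]; linarith
    · have hu2 : u + 2 ≤ l := by
        by_contra hcon
        have hTl : 2 * u + 2 = 2 * l := by omega
        apply hr2
        apply Nat.eq_sub_of_add_eq
        rw [hC]
        linarith
      obtain ⟨q, hq⟩ : ∃ q, Q = q + 2 := ⟨Q - 2, by omega⟩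
      subst hq
      obtain ⟨ψ, h1, h2⟩ := tmplA x y q (2 * l) (l + u + 2) hx hy' hx3 hy3 (by omega)
        (by omega) (by omega) (by omega) (by omega) (fun _ => by omega)
      refine ⟨ψ, ?_, h2⟩
      rw [h1]; linarith
    · exfalso
      subst hD
      linarith
  · -- T = 2u + 3
    have hu2 : u + 2 ≤ l := by omega
    rcases hxQ with hA | hB | hC | hD
    · obtain ⟨ψ, h1, h2⟩ := tmplA x y Q (2 * u + 3) 0 hx hy' hx3 hy3 hA (by omega)
        (by omega) (by omega) (by omega) (fun h => absurd rfl h)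
      refine ⟨ψ, ?_, h2⟩
      rw [h1]; linarith
    · obtain ⟨q, hq⟩ : ∃ q, Q = q + 1 := ⟨Q - 1, by omega⟩
      subst hq
      obtain ⟨ψ, h1, h2⟩ := tmplA x y q (2 * l) (u + 2) hx hy' hx3 hy3 (by omega)
        (by omega) (by omega) (by omega) (by omega) (fun _ => by omega)
      refine ⟨ψ, ?_, h2⟩
      rw [h1]; linarith
    · obtain ⟨q, hq⟩ : ∃ q, Q = q + 2 := ⟨Q - 2, by omega⟩
      subst hq
      obtain ⟨ψ, h1, h2⟩ := tmplA x y q (2 * l + 1) (l + u + 2) hx hy' hx3 hy3 (by omega)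
        (by omega) (by omega) (by omega) (by omega) (fun _ => by omega)
      refine ⟨ψ, ?_, h2⟩
      rw [h1]; linarith
    · exfalso
      subst hD
      linarith
end

section
/- Let x ≥ 3 be odd and s ∈ {0,1,...,4x}, s ≠ 1. Then there exists a permutation θ of Z_x × Z_4 with exactly 4x−s fixed points such that for every non-fixed point (i,α): θ₂(i,α) ≠ α and i − θ₁(i,α) ∈ {±1, ±2} (hence gcd(x, i − θ₁(i,α)) = 1). -/
namespace Stmt16Aux

def tog (n : ℕ) : ℕ := if n % 2 = 0 then n + 1 else n - 1

lemma tog_tog (n : ℕ) : tog (tog n) = n := by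
  unfold tog; split_ifs <;> omega

lemma tog_ne (n : ℕ) : tog n ≠ n := by
  unfold tog; split_ifs <;> omega

def qf (x n : ℕ) : ZMod x × ZMod 4 :=
  if n < 4 then ((n : ZMod x), (n : ZMod 4))
  else if n < 2 * x + 2 then
    if n % 2 = 0 then (((n - 2) / 2 : ℕ), 0) else (((n - 1) / 2 : ℕ), 1)
  else
    if n % 2 = 0 then (((n - 2 * x + 4) / 2 : ℕ), 2)
    else (((n - 2 * x + 5) / 2 : ℕ), 3)

def posf (x : ℕ) (p : ZMod x × ZMod 4) : ℕ :=
  if p.2.val = 0 then (if p.1.val = 0 then 0 else 2 * p.1.val + 2)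
  else if p.2.val = 1 then (if p.1.val = 1 then 1 else 2 * ((p.1.val + x - 2) % x) + 5)
  else if p.2.val = 2 then (if p.1.val = 2 then 2 else 2 * ((p.1.val + x - 3) % x) + 2 * x + 2)
  else (if p.1.val = 3 % x then 3 else 2 * ((p.1.val + x - 4) % x) + 2 * x + 3)

lemma mod_eval {x iv k : ℕ} (hiv : iv < x) :
    (iv + x - k) % x = if k ≤ iv then iv - k else iv + x - k := by
  split_ifs with h
  · have e : iv + x - k = (iv - k) + x := by omega
    rw [e, Nat.add_mod_right, Nat.mod_eq_of_lt (by omega)]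
  · exact Nat.mod_eq_of_lt (by omega)

lemma key_mod {x c k : ℕ} (hck : k ≤ c) (hc : c < x + k) (hc2 : c < 2 * x) :
    (c % x + x - k) % x = c - k := by
  rcases Nat.lt_or_ge c x with h | h
  · rw [Nat.mod_eq_of_lt h]
    have e : c + x - k = (c - k) + x := by omega
    rw [e, Nat.add_mod_right, Nat.mod_eq_of_lt (by omega)]
  · have e1 : c % x = c - x := by
      rw [Nat.mod_eq_sub_mod h, Nat.mod_eq_of_lt (by omega)]
    have e2 : c - x + x - k = c - k := by omega
    rw [e1, e2, Nat.mod_eq_of_lt (by omega)]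

lemma h3x {x : ℕ} (hx3 : 3 ≤ x) : (4 ≤ x ∧ 3 % x = 3) ∨ (x = 3 ∧ 3 % x = 0) := by
  rcases Nat.lt_or_ge 3 x with h | h
  · exact Or.inl ⟨by omega, Nat.mod_eq_of_lt h⟩
  · right; have : x = 3 := by omega
    subst this; exact ⟨rfl, rfl⟩

lemma pos_lt {x : ℕ} (hx3 : 3 ≤ x) (p : ZMod x × ZMod 4) : posf x p < 4 * x := by
  haveI : NeZero x := ⟨by omega⟩
  have h1 : p.1.val < x := ZMod.val_lt p.1
  have m2 := mod_eval (k := 2) h1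
  have m3 := mod_eval (k := 3) h1
  have m4 := mod_eval (k := 4) h1
  have h3 := h3x hx3
  unfold posf
  split_ifs at * <;> omega

lemma pos_q {x : ℕ} (hx3 : 3 ≤ x) {n : ℕ} (hn : n < 4 * x) : posf x (qf x n) = n := by
  haveI : NeZero x := ⟨by omega⟩
  have v4 : ∀ m : ℕ, ((m : ZMod 4)).val = m % 4 := fun m => ZMod.val_natCast _ m
  have vx : ∀ m : ℕ, ((m : ZMod x)).val = m % x := fun m => ZMod.val_natCast _ m
  unfold qf
  split_ifs with h1 h2 h3 h4
  · -- n < 4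
    interval_cases n
    · simp only [posf]; rw [vx, v4]; norm_num
    · simp only [posf]; rw [vx, v4]
      norm_num [Nat.mod_eq_of_lt (show (1:ℕ) < x by omega)]
    · simp only [posf]; rw [vx, v4]
      norm_num [Nat.mod_eq_of_lt (show (2:ℕ) < x by omega)]
    · simp only [posf]; rw [vx, v4]
      norm_num
  · -- middle, even
    have hc : (n - 2) / 2 < x := by omega
    have hc0 : (n - 2) / 2 ≠ 0 := by omega
    have hv2 : ((0 : ZMod 4)).val = 0 := rfl
    simp only [posf, hv2]
    rw [vx, Nat.mod_eq_of_lt hc, if_pos trivial, if_neg hc0]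
    omega
  · -- middle, odd
    have hc2 : (n - 1) / 2 ≤ x := by omega
    have hv2 : ((1 : ZMod 4)).val = 1 := rfl
    have hne1 : (n - 1) / 2 % x ≠ 1 := by
      rcases Nat.lt_or_ge ((n - 1) / 2) x with h | h
      · rw [Nat.mod_eq_of_lt h]; omega
      · have hxx : (n - 1) / 2 = x := by omega
        rw [hxx, Nat.mod_self]; omega
    have hkm : ((n - 1) / 2 % x + x - 2) % x = (n - 1) / 2 - 2 :=
      key_mod (by omega) (by omega) (by omega)
    simp only [posf, hv2]
    rw [vx, if_pos trivial, if_neg hne1, hkm]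
    first | omega | (norm_num; omega) | norm_num
  · -- high, even
    have hc2 : (n - 2 * x + 4) / 2 ≤ x + 1 := by omega
    have hv2 : ((2 : ZMod 4)).val = 2 := rfl
    have hne2 : (n - 2 * x + 4) / 2 % x ≠ 2 := by
      rcases Nat.lt_or_ge ((n - 2 * x + 4) / 2) x with h | h
      · rw [Nat.mod_eq_of_lt h]; omega
      · rw [Nat.mod_eq_sub_mod h, Nat.mod_eq_of_lt (by omega)]; omega
    have hkm : ((n - 2 * x + 4) / 2 % x + x - 3) % x = (n - 2 * x + 4) / 2 - 3 :=
      key_mod (by omega) (by omega) (by omega)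
    simp only [posf, hv2]
    rw [vx, if_pos trivial, if_neg hne2, hkm]
    first | omega | (norm_num; omega) | norm_num
  · -- high, odd
    have hc2 : (n - 2 * x + 5) / 2 ≤ x + 2 := by omega
    have hv2 : ((3 : ZMod 4)).val = 3 := rfl
    have h3 := h3x hx3
    have hne3 : (n - 2 * x + 5) / 2 % x ≠ 3 % x := by
      rcases Nat.lt_or_ge ((n - 2 * x + 5) / 2) x with h | h
      · rw [Nat.mod_eq_of_lt h]
        rcases h3 with ⟨hx', h3⟩ | ⟨hx', h3⟩ <;> rw [h3] <;> omega
      · rw [Nat.mod_eq_sub_mod h, Nat.mod_eq_of_lt (by omega)]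
        rcases h3 with ⟨hx', h3⟩ | ⟨hx', h3⟩ <;> rw [h3] <;> omega
    have hkm : ((n - 2 * x + 5) / 2 % x + x - 4) % x = (n - 2 * x + 5) / 2 - 4 :=
      key_mod (by omega) (by omega) (by omega)
    simp only [posf, hv2]
    rw [vx, if_neg hne3, hkm]
    first | omega | (norm_num; omega) | norm_num

lemma qf_small {x n : ℕ} (h : n < 4) : qf x n = ((n : ZMod x), (n : ZMod 4)) := by
  unfold qf; rw [if_pos h]

lemma qf_me {x n : ℕ} (h1 : ¬ n < 4) (h2 : n < 2 * x + 2) (h3 : n % 2 = 0) :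
    qf x n = ((((n - 2) / 2 : ℕ) : ZMod x), (0 : ZMod 4)) := by
  unfold qf; rw [if_neg h1, if_pos h2, if_pos h3]

lemma qf_mo {x n : ℕ} (h1 : ¬ n < 4) (h2 : n < 2 * x + 2) (h3 : ¬ n % 2 = 0) :
    qf x n = ((((n - 1) / 2 : ℕ) : ZMod x), (1 : ZMod 4)) := by
  unfold qf; rw [if_neg h1, if_pos h2, if_neg h3]

lemma qf_he {x n : ℕ} (h1 : ¬ n < 4) (h2 : ¬ n < 2 * x + 2) (h3 : n % 2 = 0) :
    qf x n = ((((n - 2 * x + 4) / 2 : ℕ) : ZMod x), (2 : ZMod 4)) := by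
  unfold qf; rw [if_neg h1, if_neg h2, if_pos h3]

lemma qf_ho {x n : ℕ} (h1 : ¬ n < 4) (h2 : ¬ n < 2 * x + 2) (h3 : ¬ n % 2 = 0) :
    qf x n = ((((n - 2 * x + 5) / 2 : ℕ) : ZMod x), (3 : ZMod 4)) := by
  unfold qf; rw [if_neg h1, if_neg h2, if_neg h3]

lemma cast_add_x {x : ℕ} (a : ℕ) : ((a + x : ℕ) : ZMod x) = ((a : ℕ) : ZMod x) := by
  push_cast [ZMod.natCast_self]
  ring

lemma q_pos {x : ℕ} (hx3 : 3 ≤ x) (p : ZMod x × ZMod 4) : qf x (posf x p) = p := by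
  haveI : NeZero x := ⟨by omega⟩
  have hiv : p.1.val < x := ZMod.val_lt p.1
  have hp1 : ((p.1.val : ℕ) : ZMod x) = p.1 := ZMod.natCast_rightInverse p.1
  have hp2 : ((p.2.val : ℕ) : ZMod 4) = p.2 := ZMod.natCast_rightInverse p.2
  have h4 : p.2.val < 4 := ZMod.val_lt p.2
  have h3 := h3x hx3
  have comp : ∀ a b : ℕ, a = p.1.val → b = p.2.val → ((a : ZMod x), (b : ZMod 4)) = p := by
    rintro a b rfl rfl
    rw [hp1, hp2]
  rcases (by omega : p.2.val = 0 ∨ p.2.val = 1 ∨ p.2.val = 2 ∨ p.2.val = 3) with ha | ha | ha | ha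
  · -- α = 0
    by_cases hi : p.1.val = 0
    · have hpos : posf x p = 0 := by simp only [posf, ha, hi]; norm_num
      rw [hpos, qf_small (by norm_num)]
      exact comp 0 0 hi.symm ha.symm
    · have hpos : posf x p = 2 * p.1.val + 2 := by
        simp only [posf, ha]; norm_num [hi]
      rw [hpos, qf_me (by omega) (by omega) (by omega)]
      exact comp _ _ (by omega) ha.symm
  · -- α = 1
    by_cases hi : p.1.val = 1
    · have hpos : posf x p = 1 := by simp only [posf, ha, hi]; norm_num
      rw [hpos, qf_small (by norm_num)]
      exact comp 1 1 hi.symm ha.symm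
    · have hpos : posf x p = 2 * ((p.1.val + x - 2) % x) + 5 := by
        simp only [posf, ha]; norm_num [hi]
      rw [hpos, mod_eval hiv]
      by_cases h2i : 2 ≤ p.1.val
      · rw [if_pos h2i, qf_mo (by omega) (by omega) (by omega)]
        exact comp _ _ (by omega) ha.symm
      · have hi0 : p.1.val = 0 := by omega
        rw [if_neg h2i, qf_mo (by omega) (by omega) (by omega), hi0]
        have e : (2 * (0 + x - 2) + 5 - 1) / 2 = 0 + x := by omega
        rw [e, cast_add_x]
        exact comp 0 1 hi0.symm ha.symm
  · -- α = 2
    by_cases hi : p.1.val = 2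
    · have hpos : posf x p = 2 := by simp only [posf, ha, hi]; norm_num
      rw [hpos, qf_small (by norm_num)]
      exact comp 2 2 hi.symm ha.symm
    · have hpos : posf x p = 2 * ((p.1.val + x - 3) % x) + 2 * x + 2 := by
        simp only [posf, ha]; norm_num [hi]
      rw [hpos, mod_eval hiv]
      by_cases h2i : 3 ≤ p.1.val
      · rw [if_pos h2i, qf_he (by omega) (by omega) (by omega)]
        exact comp _ _ (by omega) ha.symm
      · rw [if_neg h2i, qf_he (by omega) (by omega) (by omega)]
        have e : (2 * (p.1.val + x - 3) + 2 * x + 2 - 2 * x + 4) / 2 = p.1.val + x := by omega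
        rw [e, cast_add_x]
        exact comp _ _ rfl ha.symm
  · -- α = 3
    by_cases hi : p.1.val = 3 % x
    · have hpos : posf x p = 3 := by simp only [posf, ha, hi]; norm_num
      rw [hpos, qf_small (by norm_num)]
      have hm : (((3 % x : ℕ)) : ZMod x) = ((3 : ℕ) : ZMod x) := ZMod.natCast_mod 3 x
      rw [← hm]
      exact comp _ _ hi.symm ha.symm
    · have hpos : posf x p = 2 * ((p.1.val + x - 4) % x) + 2 * x + 3 := by
        simp only [posf, ha]; norm_num [hi]
      rw [hpos, mod_eval hiv]
      have hge : 4 ≤ p.1.val + x := by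
        rcases h3 with ⟨h3a, h3b⟩ | ⟨h3a, h3b⟩
        · omega
        · rw [h3b] at hi; omega
      by_cases h2i : 4 ≤ p.1.val
      · rw [if_pos h2i, qf_ho (by omega) (by omega) (by omega)]
        exact comp _ _ (by omega) ha.symm
      · rw [if_neg h2i, qf_ho (by omega) (by omega) (by omega)]
        have e : (2 * (p.1.val + x - 4) + 2 * x + 3 - 2 * x + 5) / 2 = p.1.val + x := by omega
        rw [e, cast_add_x]
        exact comp _ _ rfl ha.symm

lemma pair_adj {x : ℕ} (hx3 : 3 ≤ x) {n : ℕ} (hn : n < 4 * x) (he : n % 2 = 0) :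
    (qf x (n + 1)).2 ≠ (qf x n).2 ∧ (qf x n).1 - (qf x (n + 1)).1 = -1 := by
  rcases (by omega : n < 4 ∨ (4 ≤ n ∧ n < 2 * x + 2) ∨ (2 * x + 2 ≤ n ∧ n < 4 * x)) with
    h | ⟨h1, h2⟩ | ⟨h1, h2⟩
  · rcases (by omega : n = 0 ∨ n = 2) with rfl | rfl
    · rw [qf_small (by norm_num), qf_small (by norm_num)]
      refine ⟨(by decide : ((1:ℕ) : ZMod 4) ≠ ((0:ℕ) : ZMod 4)), ?_⟩
      show ((0 : ℕ) : ZMod x) - ((1 : ℕ) : ZMod x) = -1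
      push_cast; ring
    · rw [qf_small (by norm_num), qf_small (by norm_num)]
      refine ⟨(by decide : ((3:ℕ) : ZMod 4) ≠ ((2:ℕ) : ZMod 4)), ?_⟩
      show ((2 : ℕ) : ZMod x) - ((3 : ℕ) : ZMod x) = -1
      push_cast; ring
  · rw [qf_me (by omega) (by omega) he, qf_mo (by omega) (by omega) (by omega)]
    refine ⟨(by decide : (1 : ZMod 4) ≠ (0 : ZMod 4)), ?_⟩
    have e : (n + 1 - 1) / 2 = (n - 2) / 2 + 1 := by omega
    rw [e]; push_cast; ring
  · rw [qf_he (by omega) (by omega) he, qf_ho (by omega) (by omega) (by omega)]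
    refine ⟨(by decide : (3 : ZMod 4) ≠ (2 : ZMod 4)), ?_⟩
    have e : (n + 1 - 2 * x + 5) / 2 = (n - 2 * x + 4) / 2 + 1 := by omega
    rw [e]; push_cast; ring

lemma adj {x : ℕ} (hx3 : 3 ≤ x) {n : ℕ} (hn : n < 4 * x) :
    (qf x (tog n)).2 ≠ (qf x n).2 ∧
      ((qf x n).1 - (qf x (tog n)).1 = 1 ∨ (qf x n).1 - (qf x (tog n)).1 = -1 ∨
       (qf x n).1 - (qf x (tog n)).1 = 2 ∨ (qf x n).1 - (qf x (tog n)).1 = -2) := by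
  by_cases he : n % 2 = 0
  · have ht : tog n = n + 1 := by unfold tog; rw [if_pos he]
    obtain ⟨h1, h2⟩ := pair_adj hx3 hn he
    rw [ht]
    exact ⟨h1, Or.inr (Or.inl h2)⟩
  · have ht : tog n = n - 1 := by unfold tog; rw [if_neg he]
    have he' : (n - 1) % 2 = 0 := by omega
    have hn' : n - 1 < 4 * x := by omega
    obtain ⟨h1, h2⟩ := pair_adj hx3 hn' he'
    have hnn : n - 1 + 1 = n := by omega
    rw [hnn] at h1 h2
    rw [ht]
    refine ⟨h1.symm, Or.inl ?_⟩
    linear_combination -h2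

lemma gcd_one {x : ℕ} (hx : Odd x) (hx3 : 3 ≤ x) (d : ZMod x)
    (hd : d = 1 ∨ d = -1 ∨ d = 2 ∨ d = -2) : Nat.gcd x d.val = 1 := by
  haveI : NeZero x := ⟨by omega⟩
  have hodd : x % 2 = 1 := Nat.odd_iff.mp hx
  have hxc : ((x : ℕ) : ZMod x) = 0 := ZMod.natCast_self x
  rcases hd with rfl | rfl | rfl | rfl
  · have h1 : (1 : ZMod x) = ((1 : ℕ) : ZMod x) := by norm_cast
    rw [h1, ZMod.val_natCast, Nat.mod_eq_of_lt (by omega)]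
    exact Nat.gcd_one_right x
  · have h1 : (-1 : ZMod x) = ((x - 1 : ℕ) : ZMod x) := by
      rw [Nat.cast_sub (by omega : 1 ≤ x), hxc]
      push_cast; ring
    rw [h1, ZMod.val_natCast, Nat.mod_eq_of_lt (by omega)]
    have hdvd := Nat.dvd_sub (Nat.gcd_dvd_left x (x - 1)) (Nat.gcd_dvd_right x (x - 1))
    rw [(by omega : x - (x - 1) = 1)] at hdvd
    exact Nat.dvd_one.mp hdvd
  · have h1 : (2 : ZMod x) = ((2 : ℕ) : ZMod x) := by norm_cast
    rw [h1, ZMod.val_natCast, Nat.mod_eq_of_lt (by omega)]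
    rcases (Nat.prime_two).eq_one_or_self_of_dvd _ (Nat.gcd_dvd_right x 2) with h | h
    · exact h
    · have h2 : (2 : ℕ) ∣ x := h ▸ Nat.gcd_dvd_left x 2
      omega
  · have h1 : (-2 : ZMod x) = ((x - 2 : ℕ) : ZMod x) := by
      rw [Nat.cast_sub (by omega : 2 ≤ x), hxc]
      push_cast; ring
    rw [h1, ZMod.val_natCast, Nat.mod_eq_of_lt (by omega)]
    have hdvd := Nat.dvd_sub (Nat.gcd_dvd_left x (x - 2)) (Nat.gcd_dvd_right x (x - 2))
    rw [(by omega : x - (x - 2) = 2)] at hdvd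
    rcases (Nat.prime_two).eq_one_or_self_of_dvd _ hdvd with h | h
    · exact h
    · have h2 : (2 : ℕ) ∣ x := h ▸ Nat.gcd_dvd_left x (x - 2)
      omega

def fEven (x s : ℕ) (p : ZMod x × ZMod 4) : ZMod x × ZMod 4 :=
  if posf x p < s then qf x (tog (posf x p)) else p

def fOdd (x s : ℕ) (p : ZMod x × ZMod 4) : ZMod x × ZMod 4 :=
  if posf x p = 0 then qf x 2
  else if posf x p = 1 then qf x 0
  else if posf x p = 2 then qf x 1
  else if 4 ≤ posf x p ∧ posf x p ≤ s then qf x (tog (posf x p))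
  else p

def fOddInv (x s : ℕ) (p : ZMod x × ZMod 4) : ZMod x × ZMod 4 :=
  if posf x p = 2 then qf x 0
  else if posf x p = 0 then qf x 1
  else if posf x p = 1 then qf x 2
  else if 4 ≤ posf x p ∧ posf x p ≤ s then qf x (tog (posf x p))
  else p

end Stmt16Aux

open Stmt16Aux

/-- For odd `x ≥ 3` and `s ∈ {0,…,4x}`, `s ≠ 1`, there is a permutation `θ` of
`Z_x × Z_4` with exactly `4x − s` fixed points, such that every non-fixed point `(i,α)`
satisfies `θ₂(i,α) ≠ α` and `i − θ₁(i,α) ∈ {±1, ±2}` (hence `gcd(x, i − θ₁(i,α)) = 1`). -/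
theorem stmt16 (x s : ℕ) (hx : Odd x) (hx3 : 3 ≤ x) (hs : s ≤ 4 * x) (hs1 : s ≠ 1) :
    ∃ θ : Equiv.Perm (ZMod x × ZMod 4),
      {p : ZMod x × ZMod 4 | θ p = p}.ncard = 4 * x - s ∧
      ∀ p : ZMod x × ZMod 4, θ p ≠ p →
        (θ p).2 ≠ p.2 ∧
        (p.1 - (θ p).1 = 1 ∨ p.1 - (θ p).1 = -1 ∨
          p.1 - (θ p).1 = 2 ∨ p.1 - (θ p).1 = -2) ∧
        Nat.gcd x (p.1 - (θ p).1).val = 1 := by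
  haveI : NeZero x := ⟨by omega⟩
  rcases Nat.even_or_odd s with hpar | hpar
  · -- s even
    have hs2 : s % 2 = 0 := Nat.even_iff.mp hpar
    have togsb : ∀ {m : ℕ}, m < s → tog m < s := by
      intro m hm; unfold tog; split_ifs <;> omega
    have hinv : ∀ p, fEven x s (fEven x s p) = p := by
      intro p
      unfold fEven
      by_cases h : posf x p < s
      · have ht : tog (posf x p) < 4 * x := by have := togsb h; omega
        have hq : posf x (qf x (tog (posf x p))) = tog (posf x p) := pos_q hx3 ht
        rw [if_pos h, hq, if_pos (togsb h), tog_tog, q_pos hx3]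
      · rw [if_neg h, if_neg h]
    set θ : Equiv.Perm (ZMod x × ZMod 4) := ⟨fEven x s, fEven x s, hinv, hinv⟩ with hθdef
    have hθ : ∀ p, θ p = fEven x s p := fun p => rfl
    have hchar : ∀ p, fEven x s p = p ↔ s ≤ posf x p := by
      intro p
      constructor
      · intro h
        by_contra hlt
        push_neg at hlt
        unfold fEven at h
        rw [if_pos hlt] at h
        have h1 := pos_q hx3 (show tog (posf x p) < 4 * x by have := togsb hlt; omega)
        rw [h] at h1
        exact tog_ne (posf x p) h1.symm
      · intro h; unfold fEven; rw [if_neg (by omega)]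
    refine ⟨θ, ?_, ?_⟩
    · have hset : {p : ZMod x × ZMod 4 | θ p = p} = qf x '' (Set.Ico s (4 * x)) := by
        ext p
        simp only [Set.mem_setOf_eq, hθ, hchar, Set.mem_image, Set.mem_Ico]
        constructor
        · intro h; exact ⟨posf x p, ⟨h, pos_lt hx3 p⟩, q_pos hx3 p⟩
        · rintro ⟨m, ⟨hm1, hm2⟩, rfl⟩
          rw [pos_q hx3 hm2]; exact hm1
      have hinj : Set.InjOn (qf x) (Set.Ico s (4 * x)) := by
        intro a ha b hb hab
        have h := congrArg (posf x) hab
        rwa [pos_q hx3 ha.2, pos_q hx3 hb.2] at h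
      rw [hset, Set.ncard_image_of_injOn hinj, ← Finset.coe_Ico, Set.ncard_coe_finset,
        Nat.card_Ico]
    · intro p hne
      rw [hθ] at hne ⊢
      obtain ⟨n, hn, rfl⟩ : ∃ n, n < 4 * x ∧ qf x n = p := ⟨posf x p, pos_lt hx3 p, q_pos hx3 p⟩
      have hpn : posf x (qf x n) = n := pos_q hx3 hn
      have hlt : posf x (qf x n) < s := by
        by_contra h
        exact hne ((hchar _).mpr (by omega))
      have heval : fEven x s (qf x n) = qf x (tog n) := by
        unfold fEven; rw [if_pos hlt, hpn]
      rw [heval]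
      obtain ⟨h1, h2⟩ := adj hx3 hn
      exact ⟨h1, h2, gcd_one hx hx3 _ h2⟩
  · -- s odd
    have hs2 : s % 2 = 1 := Nat.odd_iff.mp hpar
    have hs3 : 3 ≤ s := by omega
    have hslt : s < 4 * x := by omega
    have togin : ∀ {m : ℕ}, 4 ≤ m → m ≤ s → 4 ≤ tog m ∧ tog m ≤ s ∧ tog m < 4 * x := by
      intro m h4 hms; unfold tog; split_ifs <;> omega
    have hgf : ∀ p, fOddInv x s (fOdd x s p) = p := by
      intro p
      unfold fOdd
      by_cases h0 : posf x p = 0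
      · rw [if_pos h0]
        unfold fOddInv
        rw [pos_q hx3 (show (2 : ℕ) < 4 * x by omega), if_pos rfl, ← h0]
        exact q_pos hx3 p
      · rw [if_neg h0]
        by_cases h1 : posf x p = 1
        · rw [if_pos h1]
          unfold fOddInv
          rw [pos_q hx3 (show (0 : ℕ) < 4 * x by omega), if_neg (by omega), if_pos rfl, ← h1]
          exact q_pos hx3 p
        · rw [if_neg h1]
          by_cases h2 : posf x p = 2
          · rw [if_pos h2]
            unfold fOddInv
            rw [pos_q hx3 (show (1 : ℕ) < 4 * x by omega), if_neg (by omega),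
              if_neg (by omega), if_pos rfl, ← h2]
            exact q_pos hx3 p
          · rw [if_neg h2]
            by_cases h4 : 4 ≤ posf x p ∧ posf x p ≤ s
            · rw [if_pos h4]
              obtain ⟨t4, ts, t4x⟩ := togin h4.1 h4.2
              unfold fOddInv
              rw [pos_q hx3 t4x, if_neg (by omega), if_neg (by omega), if_neg (by omega),
                if_pos ⟨t4, ts⟩, tog_tog, q_pos hx3]
            · rw [if_neg h4]
              unfold fOddInv
              rw [if_neg h2, if_neg h0, if_neg h1, if_neg h4]
    have hfg : ∀ p, fOdd x s (fOddInv x s p) = p := by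
      intro p
      unfold fOddInv
      by_cases h2 : posf x p = 2
      · rw [if_pos h2]
        unfold fOdd
        rw [pos_q hx3 (show (0 : ℕ) < 4 * x by omega), if_pos rfl, ← h2]
        exact q_pos hx3 p
      · rw [if_neg h2]
        by_cases h0 : posf x p = 0
        · rw [if_pos h0]
          unfold fOdd
          rw [pos_q hx3 (show (1 : ℕ) < 4 * x by omega), if_neg (by omega), if_pos rfl, ← h0]
          exact q_pos hx3 p
        · rw [if_neg h0]
          by_cases h1 : posf x p = 1
          · rw [if_pos h1]
            unfold fOdd
            rw [pos_q hx3 (show (2 : ℕ) < 4 * x by omega), if_neg (by omega),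
              if_neg (by omega), if_pos rfl, ← h1]
            exact q_pos hx3 p
          · rw [if_neg h1]
            by_cases h4 : 4 ≤ posf x p ∧ posf x p ≤ s
            · rw [if_pos h4]
              obtain ⟨t4, ts, t4x⟩ := togin h4.1 h4.2
              unfold fOdd
              rw [pos_q hx3 t4x, if_neg (by omega), if_neg (by omega), if_neg (by omega),
                if_pos ⟨t4, ts⟩, tog_tog, q_pos hx3]
            · rw [if_neg h4]
              unfold fOdd
              rw [if_neg h0, if_neg h1, if_neg h2, if_neg h4]
    set θ : Equiv.Perm (ZMod x × ZMod 4) := ⟨fOdd x s, fOddInv x s, hgf, hfg⟩ with hθdef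
    have hθ : ∀ p, θ p = fOdd x s p := fun p => rfl
    have hchar : ∀ p, fOdd x s p = p ↔ (posf x p = 3 ∨ s < posf x p) := by
      intro p
      constructor
      · intro h
        by_contra hc
        push_neg at hc
        obtain ⟨hc3, hcs⟩ := hc
        unfold fOdd at h
        by_cases h0 : posf x p = 0
        · rw [if_pos h0] at h
          have h' := congrArg (posf x) h
          rw [pos_q hx3 (show (2 : ℕ) < 4 * x by omega)] at h'
          omega
        · rw [if_neg h0] at h
          by_cases h1 : posf x p = 1
          · rw [if_pos h1] at h
            have h' := congrArg (posf x) h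
            rw [pos_q hx3 (show (0 : ℕ) < 4 * x by omega)] at h'
            omega
          · rw [if_neg h1] at h
            by_cases h2 : posf x p = 2
            · rw [if_pos h2] at h
              have h' := congrArg (posf x) h
              rw [pos_q hx3 (show (1 : ℕ) < 4 * x by omega)] at h'
              omega
            · rw [if_neg h2, if_pos (⟨by omega, by omega⟩ : 4 ≤ posf x p ∧ posf x p ≤ s)] at h
              have h' := congrArg (posf x) h
              obtain ⟨t4, ts, t4x⟩ := togin (m := posf x p) (by omega) (by omega)
              rw [pos_q hx3 t4x] at h'
              exact tog_ne _ h'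
      · intro h
        unfold fOdd
        rw [if_neg (by omega), if_neg (by omega), if_neg (by omega),
          if_neg (show ¬(4 ≤ posf x p ∧ posf x p ≤ s) by omega)]
    refine ⟨θ, ?_, ?_⟩
    · have hset : {p : ZMod x × ZMod 4 | θ p = p}
          = qf x '' (insert 3 (Set.Ico (s + 1) (4 * x))) := by
        ext p
        simp only [Set.mem_setOf_eq, hθ, hchar, Set.mem_image, Set.mem_insert_iff, Set.mem_Ico]
        constructor
        · intro h
          refine ⟨posf x p, ?_, q_pos hx3 p⟩
          rcases h with h | h
          · exact Or.inl h
          · exact Or.inr ⟨by omega, pos_lt hx3 p⟩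
        · rintro ⟨m, hm, rfl⟩
          have hmx : m < 4 * x := by
            rcases hm with rfl | ⟨hm1, hm2⟩
            · omega
            · exact hm2
          rw [pos_q hx3 hmx]
          rcases hm with rfl | ⟨hm1, hm2⟩
          · exact Or.inl rfl
          · exact Or.inr (by omega)
      have hinj : Set.InjOn (qf x) (insert 3 (Set.Ico (s + 1) (4 * x))) := by
        intro a ha b hb hab
        have hax : a < 4 * x := by
          rcases ha with rfl | ⟨h1, h2⟩
          · omega
          · exact h2
        have hbx : b < 4 * x := by
          rcases hb with rfl | ⟨h1, h2⟩
          · omega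
          · exact h2
        have h := congrArg (posf x) hab
        rwa [pos_q hx3 hax, pos_q hx3 hbx] at h
      rw [hset, Set.ncard_image_of_injOn hinj,
        show insert 3 (Set.Ico (s + 1) (4 * x)) = ↑(insert 3 (Finset.Ico (s + 1) (4 * x))) by
          rw [Finset.coe_insert, Finset.coe_Ico],
        Set.ncard_coe_finset,
        Finset.card_insert_of_notMem (by simp only [Finset.mem_Ico]; omega),
        Nat.card_Ico]
      omega
    · intro p hne
      rw [hθ] at hne ⊢
      obtain ⟨n, hn, rfl⟩ : ∃ n, n < 4 * x ∧ qf x n = p := ⟨posf x p, pos_lt hx3 p, q_pos hx3 p⟩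
      have hpn : posf x (qf x n) = n := pos_q hx3 hn
      have hnot : ¬(n = 3 ∨ s < n) := by
        intro h
        exact hne ((hchar _).mpr (by omega))
      push_neg at hnot
      obtain ⟨hne3, hles⟩ := hnot
      rcases (by omega : n = 0 ∨ n = 1 ∨ n = 2 ∨ (4 ≤ n ∧ n ≤ s)) with rfl | rfl | rfl | ⟨h4, h5⟩
      · have heval : fOdd x s (qf x 0) = qf x 2 := by
          unfold fOdd; rw [hpn, if_pos rfl]
        rw [heval, qf_small (by norm_num), qf_small (by norm_num)]
        have hd : ((0 : ℕ) : ZMod x) - ((2 : ℕ) : ZMod x) = -2 := by push_cast; ring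
        exact ⟨(by decide : ((2 : ℕ) : ZMod 4) ≠ ((0 : ℕ) : ZMod 4)),
          Or.inr (Or.inr (Or.inr hd)), gcd_one hx hx3 _ (Or.inr (Or.inr (Or.inr hd)))⟩
      · have heval : fOdd x s (qf x 1) = qf x 0 := by
          unfold fOdd; rw [hpn, if_neg (by omega), if_pos rfl]
        rw [heval, qf_small (by norm_num), qf_small (by norm_num)]
        have hd : ((1 : ℕ) : ZMod x) - ((0 : ℕ) : ZMod x) = 1 := by push_cast; ring
        exact ⟨(by decide : ((0 : ℕ) : ZMod 4) ≠ ((1 : ℕ) : ZMod 4)),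
          Or.inl hd, gcd_one hx hx3 _ (Or.inl hd)⟩
      · have heval : fOdd x s (qf x 2) = qf x 1 := by
          unfold fOdd; rw [hpn, if_neg (by omega), if_neg (by omega), if_pos rfl]
        rw [heval, qf_small (by norm_num), qf_small (by norm_num)]
        have hd : ((2 : ℕ) : ZMod x) - ((1 : ℕ) : ZMod x) = 1 := by push_cast; ring
        exact ⟨(by decide : ((1 : ℕ) : ZMod 4) ≠ ((2 : ℕ) : ZMod 4)),
          Or.inl hd, gcd_one hx hx3 _ (Or.inl hd)⟩
      · have heval : fOdd x s (qf x n) = qf x (tog n) := by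
          unfold fOdd
          rw [hpn, if_neg (by omega), if_neg (by omega), if_neg (by omega), if_pos ⟨h4, h5⟩]
        rw [heval]
        obtain ⟨h1, h2⟩ := adj hx3 hn
        exact ⟨h1, h2, gcd_one hx hx3 _ h2⟩
end
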